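/- arXiv:1809.02243 — 10 statements merged into one kernel-verified Lean document; each statement's English description precedes it below -/
import Mathlib

section
/- Let J : ℕ → ℝ be positive and strictly decreasing, N a positive integer, and k ∈ {0,...,N}. For every configuration σ ∈ {-1,+1}^{1,...,N} with exactly k spins equal to +1, ∑_{i=1}^N ∑_{j=1}^N J(|i-j|) 𝟙[σ_i ≠ σ_j] ≥ 2 ∑_{i=1}^k ∑_{j=k+1}^N J(|i-j|). -/
open Finset

/-!
Write `W(S) = ∑_{i<j in S} J(j-i)`. For a partition `{0,…,N-1} = A ⊔ B` the total `W` splits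
as `W(A) + W(B)` plus the cross sum `∑_{i∈A, j∈B} J(|i-j|)`, so it suffices that `W(S)` is
maximised, among sets of a given size, by an interval. This follows by induction on `S`: the
maximum `m` of `S` lies at `|S| - 1` distinct positive distances from the other points, and `J`
is decreasing, so the new terms are at most `J(1) + … + J(|S| - 1)`, the amount added to an
interval. Hence the cross sum is smallest for `[0,k) ⊔ [k,N)`, and for a ±1 configuration the
disagreement sum is twice the cross sum of `{σ = 1}` and `{σ = -1}`.
-/

/-- Long-range Ising Hamiltonian with free boundary conditions on {0,...,N-1}:
`H(σ) = -∑_{i<j} J(|i-j|) σᵢ σⱼ - h ∑ᵢ σᵢ`. -/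
noncomputable def H (N : ℕ) (J : ℕ → ℝ) (h : ℝ) (σ : Fin N → ℝ) : ℝ :=
  -(∑ i : Fin N, ∑ j : Fin N,
      if (i : ℕ) < (j : ℕ) then J (Nat.dist (i : ℕ) (j : ℕ)) * σ i * σ j else 0)
    - h * ∑ i : Fin N, σ i

/-- A spin configuration takes values in {-1, +1}. -/
def IsConfig {N : ℕ} (σ : Fin N → ℝ) : Prop := ∀ i, σ i = 1 ∨ σ i = -1

/-- The configuration `L^(k)`: +1 on the first k sites, -1 elsewhere. -/
def Lconf (N k : ℕ) : Fin N → ℝ := fun i => if (i : ℕ) < k then 1 else -1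

/-- The configuration `R^(k)`: +1 on the last k sites, -1 elsewhere. -/
def Rconf (N k : ℕ) : Fin N → ℝ := fun i => if N - k ≤ (i : ℕ) then 1 else -1

def pairSum (J : ℕ → ℝ) (S : Finset ℕ) : ℝ :=
  ∑ i ∈ S, ∑ j ∈ S, if i < j then J (j - i) else 0

def crossSum (J : ℕ → ℝ) (A B : Finset ℕ) : ℝ :=
  ∑ i ∈ A, ∑ j ∈ B, J (Nat.dist i j)

section
variable {J : ℕ → ℝ}

theorem sum_le_sum_range_of_antitoneOn {a : ℕ} (hJ : AntitoneOn J (Set.Ici a))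
    {T : Finset ℕ} (hT : ∀ t ∈ T, a ≤ t) :
    ∑ t ∈ T, J t ≤ ∑ r ∈ range #T, J (a + r) := by
  induction T using Finset.induction_on_max with
  | empty => simp
  | insert m T hlt ih =>
    have hm : m ∉ T := fun h => lt_irrefl m (hlt m h)
    have ham : a ≤ m := hT m (mem_insert_self m T)
    have hcard : #T ≤ m - a := by
      calc #T ≤ #(Ico a m) :=
            card_le_card fun t ht => mem_Ico.2 ⟨hT t (mem_insert_of_mem ht), hlt t ht⟩
        _ = m - a := Nat.card_Ico a m
    rw [sum_insert hm, card_insert_of_notMem hm, sum_range_succ, add_comm]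
    gcongr ?_ + ?_
    · exact ih fun t ht => hT t (mem_insert_of_mem ht)
    · exact hJ (by simp) (by simp [ham]) (by omega)

theorem pairSum_insert_of_forall_lt {S : Finset ℕ} {m : ℕ} (hm : ∀ i ∈ S, i < m) :
    pairSum J (insert m S) = pairSum J S + ∑ i ∈ S, J (m - i) := by
  have hmS : m ∉ S := fun h => lt_irrefl m (hm m h)
  have hrow : ∀ j ∈ S, ¬ m < j := fun j hj => (hm j hj).not_gt
  simp only [pairSum, sum_insert hmS, lt_irrefl, if_false]
  rw [sum_eq_zero fun j hj => if_neg (hrow j hj), sum_add_distrib,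
    sum_congr rfl fun i hi => if_pos (hm i hi)]
  ring

theorem pairSum_le_pairSum_range (hJ : AntitoneOn J (Set.Ici 1)) (S : Finset ℕ) :
    pairSum J S ≤ pairSum J (range #S) := by
  induction S using Finset.induction_on_max with
  | empty => simp [pairSum]
  | insert m S hlt ih =>
    have hm : m ∉ S := fun h => lt_irrefl m (hlt m h)
    have hinj : Set.InjOn (m - ·) S := fun i hi i' hi' h => by
      have := hlt i hi; have := hlt i' hi'; simp only at h; omega
    have hnew : ∑ i ∈ S, J (m - i) ≤ ∑ i ∈ range #S, J (#S - i) := by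
      calc ∑ i ∈ S, J (m - i) = ∑ t ∈ S.image (m - ·), J t := (sum_image hinj).symm
        _ ≤ ∑ r ∈ range #S, J (1 + r) := by
          rw [← card_image_of_injOn hinj]
          refine sum_le_sum_range_of_antitoneOn hJ fun t ht => ?_
          obtain ⟨i, hi, rfl⟩ := mem_image.1 ht
          have := hlt i hi; omega
        _ = ∑ i ∈ range #S, J (#S - i) := by
          rw [← sum_range_reflect]
          exact sum_congr rfl fun i hi => by rw [mem_range] at hi; congr 1; omega
    rw [pairSum_insert_of_forall_lt hlt, card_insert_of_notMem hm, range_add_one,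
      pairSum_insert_of_forall_lt fun i hi => mem_range.1 hi]
    gcongr

theorem pairSum_map_addRightEmbedding (S : Finset ℕ) (c : ℕ) :
    pairSum J (S.map (addRightEmbedding c)) = pairSum J S := by
  simp [pairSum, sum_map, Nat.add_sub_add_right]

theorem pairSum_Ico {k N : ℕ} (h : k ≤ N) :
    pairSum J (Ico k N) = pairSum J (range (N - k)) := by
  rw [← pairSum_map_addRightEmbedding (range (N - k)) k, range_eq_Ico, map_add_right_Ico,
    zero_add, Nat.sub_add_cancel h]

theorem pairSum_union {A B : Finset ℕ} (hAB : Disjoint A B) :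
    pairSum J (A ∪ B) = pairSum J A + pairSum J B + crossSum J A B := by
  have hdist : ∀ i ∈ A, ∀ j ∈ B,
      ((if i < j then J (j - i) else 0) + if j < i then J (i - j) else 0) = J (Nat.dist i j) := by
    intro i hi j hj
    have hij : i ≠ j := fun h => disjoint_left.1 hAB hi (h ▸ hj)
    rcases hij.lt_or_gt with h | h
    · simp [h, h.not_gt, Nat.dist_eq_sub_of_le h.le]
    · simp [h, h.not_gt, Nat.dist_eq_sub_of_le_right h.le]
  simp only [pairSum, crossSum, sum_union hAB, sum_add_distrib]
  rw [sum_comm (s := B) (t := A), ← sum_congr rfl fun i hi => sum_congr rfl (hdist i hi)]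
  simp only [sum_add_distrib]
  ring

theorem crossSum_range_Ico_le_crossSum (hJ : AntitoneOn J (Set.Ici 1)) {N : ℕ} {A B : Finset ℕ}
    (hAB : Disjoint A B) (hU : A ∪ B = range N) :
    crossSum J (range #A) (Ico #A N) ≤ crossSum J A B := by
  have hcardA : #A ≤ N := by simpa using card_le_card (hU ▸ subset_union_left : A ⊆ range N)
  have hcardB : #B = N - #A := by
    rw [← card_range N, ← hU, card_union_of_disjoint hAB, Nat.add_sub_cancel_left]
  have hsplit : pairSum J (range N) =
      pairSum J (range #A) + pairSum J (Ico #A N) + crossSum J (range #A) (Ico #A N) := by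
    have hdisj : Disjoint (range #A) (Ico #A N) := by
      rw [range_eq_Ico]; exact Ico_disjoint_Ico_consecutive 0 #A N
    rw [← pairSum_union hdisj, range_eq_Ico, range_eq_Ico,
      Ico_union_Ico_eq_Ico (Nat.zero_le _) hcardA]
  have hA := pairSum_le_pairSum_range hJ A
  have hB := pairSum_le_pairSum_range hJ B
  rw [hcardB, ← pairSum_Ico hcardA] at hB
  have hsplitAB := pairSum_union (J := J) hAB
  rw [hU] at hsplitAB
  linarith

end

theorem sum_sum_ite_mem_iff_notMem {ι M : Type*} [Fintype ι] [DecidableEq ι] [AddCommMonoid M]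
    (s : Finset ι) (g : ι → ι → M) (hg : ∀ i j, g i j = g j i) :
    ∑ i, ∑ j, (if (i ∈ s ↔ j ∉ s) then g i j else 0) = 2 • ∑ i ∈ s, ∑ j ∈ sᶜ, g i j := by
  have hin : ∀ i ∈ s, ∑ j, (if (i ∈ s ↔ j ∉ s) then g i j else 0) = ∑ j ∈ sᶜ, g i j :=
    fun i hi => by rw [← sum_filter]; congr; ext; simp [hi]
  have hout : ∀ i ∈ sᶜ, ∑ j, (if (i ∈ s ↔ j ∉ s) then g i j else 0) = ∑ j ∈ s, g i j :=
    fun i hi => by rw [← sum_filter]; congr; ext; simp_all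
  rw [← sum_add_sum_compl s, sum_congr rfl hin, sum_congr rfl hout, sum_comm (s := sᶜ), two_nsmul]
  simp only [hg]

theorem disagreement_sum_lower_bound_general (N k : ℕ)
    (J : ℕ → ℝ) (hdec : ∀ n, 1 ≤ n → J (n + 1) < J n)
    (σ : Fin N → ℝ) (hσ : IsConfig σ)
    (hcard : (Finset.univ.filter fun i => σ i = 1).card = k) :
    2 * ∑ i ∈ Finset.range k, ∑ j ∈ Finset.Ico k N, J (j - i) ≤
      ∑ i : Fin N, ∑ j : Fin N,
        if i ≠ j ∧ σ i ≠ σ j then J (Nat.dist (i : ℕ) (j : ℕ)) else 0 := by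
  set P := univ.filter fun i => σ i = 1
  have hJ : AntitoneOn J (Set.Ici 1) := antitoneOn_nat_Ici_of_succ_le fun n hn => (hdec n hn).le
  have hdisagree : ∀ i j, (i ≠ j ∧ σ i ≠ σ j) ↔ (i ∈ P ↔ j ∉ P) := by
    intro i j
    rw [and_iff_right_of_imp fun h hij => h (congrArg σ hij)]
    rcases hσ i with hi | hi <;> rcases hσ j with hj | hj <;> norm_num [P, hi, hj]
  have hLHS : ∑ i ∈ range k, ∑ j ∈ Ico k N, J (j - i) = crossSum J (range k) (Ico k N) :=
    sum_congr rfl fun i hi => sum_congr rfl fun j hj => by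
      rw [Nat.dist_eq_sub_of_le ((mem_range.1 hi).le.trans (mem_Ico.1 hj).1)]
  have hRHS : crossSum J (P.map Fin.valEmbedding) (Pᶜ.map Fin.valEmbedding) =
      ∑ i ∈ P, ∑ j ∈ Pᶜ, J (Nat.dist i j) := by
    simp only [crossSum, sum_map, Fin.valEmbedding_apply]
  have hcross := crossSum_range_Ico_le_crossSum hJ
    ((disjoint_map Fin.valEmbedding).2 (disjoint_compl_right (a := P)))
    (by rw [← map_union, union_compl, Fin.map_valEmbedding_univ, Nat.Iio_eq_range])
  rw [card_map, hcard, hRHS] at hcross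
  simp only [hdisagree]
  rw [sum_sum_ite_mem_iff_notMem P _ fun i j => by rw [Nat.dist_comm], two_nsmul, ← two_mul,
    hLHS]
  gcongr

/-- Proposition 4.1 (inequality): for any configuration with exactly `k` plus spins,
`∑_{i≠j} J(|i-j|) 𝟙[σᵢ ≠ σⱼ] ≥ 2 ∑_{i=1}^{k} ∑_{j=k+1}^{N} J(|i-j|)`. -/
theorem disagreement_sum_lower_bound (N k : ℕ) (hN : 1 ≤ N) (hk : k ≤ N)
    (J : ℕ → ℝ) (hpos : ∀ n, 1 ≤ n → 0 < J n) (hdec : ∀ n, 1 ≤ n → J (n + 1) < J n)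
    (σ : Fin N → ℝ) (hσ : IsConfig σ)
    (hcard : (Finset.univ.filter fun i => σ i = 1).card = k) :
    2 * ∑ i ∈ Finset.range k, ∑ j ∈ Finset.Ico k N, J (j - i) ≤
      ∑ i : Fin N, ∑ j : Fin N,
        if i ≠ j ∧ σ i ≠ σ j then J (Nat.dist (i : ℕ) (j : ℕ)) else 0 :=
  disagreement_sum_lower_bound_general N k J hdec σ hσ hcard
end

section
/- Let J : ℕ → ℝ be positive and strictly decreasing, N ≥ 1, k ∈ {0,...,N}, and σ a configuration with exactly k plus spins. Then equality ∑_{i,j} J(|i-j|) 𝟙[σ_i ≠ σ_j] = 2 ∑_{i=1}^k ∑_{j=k+1}^N J(|i-j|) holds if and only if σ = L^(k) or σ = R^(k). -/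
open Finset

/-!
Identify a configuration with its set `A ⊆ [0, N)` of plus sites. The disagreement sum is
`2 ∑ₑ J(e) c_A(e)`, where `c_A(e)` counts the pairs `(i, i + e)` separated by `A`. For every
window `m`, the cumulative count `∑_{e<m} c_A(e)` is at least the one of the initial segment
`[0, k)`, so Abel summation against the decreasing weights `J` shows that the segment minimises
the sum. In the equality case the summation by parts also forces `c_A(1) ≤ c_{[0,k)}(1) = 1`,
because `J 1 > J 2`, and a set with at most one boundary between neighbouring sites is an
initial or a final segment, i.e. `L^(k)` or `R^(k)`. Conversely, `R^(k)` is the mirror image of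
`L^(k)`.
-/

theorem sum_range_sum_range_eq_two_nsmul {M : Type*} [AddCommMonoid M] (h : ℕ → ℕ → M)
    (hsymm : ∀ i j, h i j = h j i) (hdiag : ∀ i, h i i = 0) (N : ℕ) :
    ∑ i ∈ range N, ∑ j ∈ range N, h i j = 2 • ∑ j ∈ range N, ∑ i ∈ range (j + 1), h i j := by
  induction N with
  | zero => simp
  | succ N ih =>
    simp only [sum_range_succ, sum_add_distrib, ih, hdiag, hsymm N, smul_add, two_nsmul]
    abel

theorem sum_range_mul_eq_by_parts {R : Type*} [CommRing R] (J h : ℕ → R) (n : ℕ) :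
    ∑ e ∈ range n, J e * h e =
      J n * ∑ e ∈ range n, h e + ∑ d ∈ range n, (J d - J (d + 1)) * ∑ e ∈ range (d + 1), h e := by
  induction n with
  | zero => simp
  | succ n ih =>
    rw [sum_range_succ, ih, sum_range_succ (fun d => _ * _) n, sum_range_succ h n]
    ring

theorem mul_le_sum_range_mul {J h : ℕ → ℝ} {n : ℕ} (hn : 2 ≤ n) (hJn : 0 ≤ J n)
    (hJ : ∀ d, 1 ≤ d → J (d + 1) ≤ J d) (h0 : h 0 = 0)
    (hh : ∀ m ≤ n, 0 ≤ ∑ e ∈ range m, h e) :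
    (J 1 - J 2) * h 1 ≤ ∑ e ∈ range n, J e * h e := by
  have hterm : ∀ d ∈ range n, 0 ≤ (J d - J (d + 1)) * ∑ e ∈ range (d + 1), h e := by
    intro d hd
    rcases Nat.eq_zero_or_pos d with rfl | hd0
    · simp [h0]
    · exact mul_nonneg (sub_nonneg.mpr (hJ d hd0)) (hh _ (mem_range.mp hd))
  have h1 : (J 1 - J 2) * h 1 ≤ ∑ d ∈ range n, (J d - J (d + 1)) * ∑ e ∈ range (d + 1), h e := by
    simpa [sum_range_succ, h0] using single_le_sum hterm (mem_range.mpr hn)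
  rw [sum_range_mul_eq_by_parts]
  nlinarith [mul_nonneg hJn (hh n le_rfl)]

theorem card_Ioo_le_card_filter {p : ℕ → Prop} [DecidablePred p] {b M N : ℕ} (hM : M ≤ N + 1)
    (hp : #{x ∈ range N | ¬p x} ≤ b) : #(Ioo b M) ≤ #{e ∈ Ioo 0 M | p (N - e)} := by
  have hsplit := card_filter_add_card_filter_not (s := Ioo 0 M) (p := fun e => p (N - e))
  have hneg : #{e ∈ Ioo 0 M | ¬p (N - e)} ≤ #{x ∈ range N | ¬p x} := by
    refine card_le_card_of_injOn (N - ·) (fun e he => ?_) (fun e he e' he' h => ?_)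
    · simp only [mem_coe, mem_filter, mem_Ioo, mem_range] at he ⊢
      exact ⟨by omega, he.2⟩
    · simp only [mem_coe, mem_filter, mem_Ioo] at he he' h
      omega
  simp only [Nat.card_Ioo] at hsplit ⊢
  omega

theorem eq_range_card_of_mem_of_succ_mem {A : Finset ℕ} (h : ∀ x, x + 1 ∈ A → x ∈ A) :
    A = range #A := by
  have hdown : ∀ x ∈ A, range (x + 1) ⊆ A := by
    intro x
    induction x with
    | zero => simp
    | succ x ih =>
      intro hx
      rw [range_add_one]
      exact insert_subset hx (ih (h x hx))
  refine eq_of_subset_of_card_le (fun x hx => ?_) (card_range _).le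
  have := card_le_card (hdown x hx)
  rw [card_range] at this
  exact mem_range.mpr this

theorem eq_Ico_card_of_succ_mem {A : Finset ℕ} {N : ℕ} (hA : A ⊆ range N)
    (h : ∀ x ∈ A, x + 1 < N → x + 1 ∈ A) : A = Ico (N - #A) N := by
  have hup : ∀ x ∈ A, Ico x N ⊆ A := by
    intro x hx y hy
    rw [mem_Ico] at hy
    induction y, hy.1 using Nat.le_induction with
    | base => exact hx
    | succ y hxy ih => exact h y (ih ⟨hxy, by omega⟩) hy.2
  have hAN : #A ≤ N := (card_le_card hA).trans_eq (card_range N)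
  refine eq_of_subset_of_card_le (fun x hx => ?_) (by rw [Nat.card_Ico]; omega)
  have h1 := card_le_card (hup x hx)
  have h2 := mem_range.mp (hA hx)
  rw [Nat.card_Ico] at h1
  exact mem_Ico.mpr ⟨by omega, h2⟩

def crossings (A : Finset ℕ) (N e : ℕ) : ℕ := #{i ∈ range (N - e) | ¬(i ∈ A ↔ i + e ∈ A)}

theorem crossings_zero_right (A : Finset ℕ) (N : ℕ) : crossings A N 0 = 0 := by
  simp [crossings]

theorem crossings_congr {A B : Finset ℕ} {N : ℕ} (h : ∀ x < N, x ∈ A ↔ x ∈ B) (e : ℕ) :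
    crossings A N e = crossings B N e := by
  unfold crossings
  congr 1
  refine filter_congr fun i hi => ?_
  rw [mem_range] at hi
  rw [h i (by omega), h (i + e) (by omega)]

theorem crossings_succ (A : Finset ℕ) (N e : ℕ) :
    crossings A (N + 1) e =
      crossings A N e + if e ≤ N ∧ ¬(N - e ∈ A ↔ N ∈ A) then 1 else 0 := by
  unfold crossings
  rw [card_filter, card_filter]
  rcases le_or_gt e N with he | he
  · rw [show N + 1 - e = N - e + 1 by omega, sum_range_succ, Nat.sub_add_cancel he]
    simp [he]
  · simp [show N + 1 - e = 0 by omega, show N - e = 0 by omega, he.not_ge]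

theorem crossings_range_succ (k N e : ℕ) :
    crossings (range (k + 1)) (N + 1) e =
      crossings (range k) N e + if k < e ∧ e ≤ N then 1 else 0 := by
  unfold crossings
  rw [card_filter, card_filter]
  rcases le_or_gt e N with he | he
  · rw [show N + 1 - e = N - e + 1 by omega, sum_range_succ']
    simp only [mem_range]
    congr 1
    · exact sum_congr rfl fun i _ => if_congr (by omega) rfl rfl
    · exact if_congr (by omega) rfl rfl
  · simp [show N + 1 - e = 0 by omega, show N - e = 0 by omega, he.not_ge]

theorem crossings_range_one_le_one (k N : ℕ) : crossings (range k) N 1 ≤ 1 := by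
  refine (card_le_card (t := {k - 1}) fun i hi => ?_).trans (card_singleton _).le
  simp only [mem_filter, mem_range] at hi
  rw [mem_singleton]
  omega

theorem sum_crossings_succ (A : Finset ℕ) (N m : ℕ) :
    ∑ e ∈ range m, crossings A (N + 1) e =
      ∑ e ∈ range m, crossings A N e + #{e ∈ range m | e ≤ N ∧ ¬(N - e ∈ A ↔ N ∈ A)} := by
  simp only [crossings_succ, sum_add_distrib, card_filter]

theorem sum_crossings_range_succ (k N m : ℕ) :
    ∑ e ∈ range m, crossings (range (k + 1)) (N + 1) e =
      ∑ e ∈ range m, crossings (range k) N e + #{e ∈ range m | k < e ∧ e ≤ N} := by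
  simp only [crossings_range_succ, sum_add_distrib, card_filter]

/- Induction on `N`: the new site `N` creates at least as many crossings of length `< m` as the
comparison segment gains, that segment being `range (k + 1)` grown at its left end when `N ∈ A`,
and `range k` unchanged otherwise. -/
theorem sum_crossings_range_card_le {A : Finset ℕ} {N : ℕ} (hA : A ⊆ range N) (m : ℕ) :
    ∑ e ∈ range m, crossings (range #A) N e ≤ ∑ e ∈ range m, crossings A N e := by
  induction N generalizing A with
  | zero => simp [crossings]
  | succ N ih =>
    have hM : min m (N + 1) ≤ N + 1 := min_le_right _ _
    rw [sum_crossings_succ A]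
    by_cases hN : N ∈ A
    · have hA' : A.erase N ⊆ range N := subset_insert_iff.mp (range_add_one ▸ hA)
      have hsum : ∑ e ∈ range m, crossings A N e = ∑ e ∈ range m, crossings (A.erase N) N e :=
        sum_congr rfl fun e _ => crossings_congr (fun x hx => by simp [hx.ne]) e
      have hplus : #{x ∈ range N | ¬x ∉ A} ≤ #(A.erase N) := card_le_card fun x hx => by
        simp only [mem_filter, mem_range, not_not] at hx
        exact mem_erase.mpr ⟨hx.1.ne, hx.2⟩
      have hcount := card_Ioo_le_card_filter hM hplus
      rw [← card_erase_add_one hN, sum_crossings_range_succ, hsum]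
      refine add_le_add (ih hA') ((congr_arg card ?_).trans_le <|
        hcount.trans <| card_le_card fun e he => ?_)
      · ext e; simp only [mem_filter, mem_range, mem_Ioo, lt_min_iff]; omega
      · simp only [mem_filter, mem_Ioo, mem_range, lt_min_iff] at he ⊢
        exact ⟨by omega, by omega, by simp [hN, he.2]⟩
    · have hA' : A ⊆ range N := (subset_insert_iff_of_notMem hN).mp (range_add_one ▸ hA)
      have hAN : #A ≤ N := (card_le_card hA').trans_eq (card_range N)
      have hminus : #{x ∈ range N | x ∉ A} ≤ N - #A := by
        have := card_filter_add_card_filter_not (s := range N) (· ∈ A)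
        rw [filter_mem_eq_inter, inter_eq_right.mpr hA', card_range] at this
        omega
      have hcount := card_Ioo_le_card_filter hM hminus
      rw [sum_crossings_succ]
      refine add_le_add (ih hA') ((congr_arg card ?_).trans_le <|
        hcount.trans <| card_le_card fun e he => ?_)
      · ext e; simp only [mem_filter, mem_range, mem_Ioo, lt_min_iff]; omega
      · simp only [mem_filter, mem_Ioo, mem_range, lt_min_iff] at he ⊢
        exact ⟨by omega, by omega, by simp [hN, he.2]⟩

theorem eq_range_or_eq_Ico_of_crossings_le_one {A : Finset ℕ} {N : ℕ} (hA : A ⊆ range N)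
    (h : crossings A N 1 ≤ 1) : A = range #A ∨ A = Ico (N - #A) N := by
  by_contra! hne
  obtain ⟨x, hx1, hx⟩ : ∃ x, x + 1 ∈ A ∧ x ∉ A := by
    by_contra! hdown
    exact hne.1 (eq_range_card_of_mem_of_succ_mem hdown)
  obtain ⟨y, hy, hy1N, hy1⟩ : ∃ y ∈ A, y + 1 < N ∧ y + 1 ∉ A := by
    by_contra! hup
    exact hne.2 (eq_Ico_card_of_succ_mem hA hup)
  have hxN := mem_range.mp (hA hx1)
  have hxy : x ≠ y := by rintro rfl; exact hx hy
  have h2 : {x, y} ⊆ ({i ∈ range (N - 1) | ¬(i ∈ A ↔ i + 1 ∈ A)} : Finset ℕ) := by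
    intro i hi
    rcases mem_insert.mp hi with rfl | hi
    · simp only [mem_filter, mem_range, hx, hx1, iff_true, not_false_eq_true, and_true]
      omega
    · rw [mem_singleton.mp hi]
      simp only [mem_filter, mem_range, hy, hy1, iff_false, not_true_eq_false, not_false_eq_true,
        and_true]
      omega
  have := card_le_card h2
  rw [card_pair hxy] at this
  exact absurd (this.trans h) (by norm_num)

noncomputable def cutWeight (A : Finset ℕ) (N : ℕ) (J : ℕ → ℝ) : ℝ :=
  ∑ j ∈ range N, ∑ i ∈ range (j + 1) with ¬(i ∈ A ↔ j ∈ A), J (j - i)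

theorem cutWeight_eq_sum_crossings (A : Finset ℕ) (N : ℕ) (J : ℕ → ℝ) :
    cutWeight A N J = ∑ e ∈ range N, J e * crossings A N e := by
  let f (i e : ℕ) : ℝ := if ¬(i ∈ A ↔ i + e ∈ A) then J e else 0
  calc cutWeight A N J = ∑ j ∈ range N, ∑ i ∈ range (j + 1), f i (j - i) := by
        refine sum_congr rfl fun j _ => ?_
        rw [sum_filter]
        refine sum_congr rfl fun i hi => ?_
        simp only [f, Nat.add_sub_cancel' (Nat.lt_succ_iff.mp (mem_range.mp hi))]
    _ = ∑ i ∈ range N, ∑ e ∈ range (N - i), f i e := sum_range_diag_flip N f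
    _ = ∑ e ∈ range N, ∑ i ∈ range (N - e), f i e :=
        sum_comm' fun i e => by simp only [mem_range]; omega
    _ = ∑ e ∈ range N, J e * crossings A N e := by
        refine sum_congr rfl fun e _ => ?_
        rw [← sum_filter, sum_const, nsmul_eq_mul, mul_comm, crossings]

theorem cutWeight_range (k N : ℕ) (J : ℕ → ℝ) :
    cutWeight (range k) N J = ∑ i ∈ range k, ∑ j ∈ Ico k N, J (j - i) :=
  sum_comm' fun j i => by simp only [mem_filter, mem_range, mem_Ico]; omega

theorem crossings_one_le_of_cutWeight_le {A : Finset ℕ} {N : ℕ} {J : ℕ → ℝ}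
    (hA : A ⊆ range N) (hJ : ∀ n, 1 ≤ n → 0 ≤ J n) (hanti : ∀ n, 1 ≤ n → J (n + 1) ≤ J n)
    (h12 : J 2 < J 1) (hle : cutWeight A N J ≤ cutWeight (range #A) N J) :
    crossings A N 1 ≤ crossings (range #A) N 1 := by
  rcases lt_or_ge N 2 with hN | hN
  · simp [crossings, show N - 1 = 0 by omega]
  let h (e : ℕ) : ℝ := crossings A N e - crossings (range #A) N e
  have hpartial (m : ℕ) (_ : m ≤ N) : 0 ≤ ∑ e ∈ range m, h e := by
    simp only [h, sum_sub_distrib, sub_nonneg]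
    exact_mod_cast sum_crossings_range_card_le hA m
  have hbound := mul_le_sum_range_mul hN (hJ N (by omega)) hanti
    (by simp [h, crossings_zero_right]) hpartial
  have hsum : ∑ e ∈ range N, J e * h e = cutWeight A N J - cutWeight (range #A) N J := by
    simp only [h, mul_sub, sum_sub_distrib, cutWeight_eq_sum_crossings]
  have : h 1 ≤ 0 := by nlinarith
  simpa [h] using this

noncomputable def disagreement (J : ℕ → ℝ) {N : ℕ} (σ : Fin N → ℝ) : ℝ :=
  ∑ i : Fin N, ∑ j : Fin N, if i ≠ j ∧ σ i ≠ σ j then J (Nat.dist i j) else 0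

theorem disagreement_eq_two_mul_cutWeight (J : ℕ → ℝ) {N : ℕ} {σ : Fin N → ℝ}
    (hσ : IsConfig σ) {A : Finset ℕ} (hA : ∀ i : Fin N, (i : ℕ) ∈ A ↔ σ i = 1) :
    disagreement J σ = 2 * cutWeight A N J := by
  have hsep (i j : Fin N) : i ≠ j ∧ σ i ≠ σ j ↔ ¬((i : ℕ) ∈ A ↔ (j : ℕ) ∈ A) := by
    rw [hA, hA, and_iff_right_of_imp (ne_of_apply_ne σ)]
    rcases hσ i with hi | hi <;> rcases hσ j with hj | hj <;> norm_num [hi, hj]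
  let h (i j : ℕ) : ℝ := if ¬(i ∈ A ↔ j ∈ A) then J (Nat.dist i j) else 0
  calc disagreement J σ = ∑ i ∈ range N, ∑ j ∈ range N, h i j := by
        rw [← Fin.sum_univ_eq_sum_range (fun i => ∑ j ∈ range N, h i j)]
        refine sum_congr rfl fun i _ => ?_
        rw [← Fin.sum_univ_eq_sum_range (h i)]
        exact sum_congr rfl fun j _ => if_congr (hsep i j) rfl rfl
    _ = 2 • ∑ j ∈ range N, ∑ i ∈ range (j + 1), h i j :=
        sum_range_sum_range_eq_two_nsmul h (fun i j => by simp only [h, Nat.dist_comm, Iff.comm])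
          (fun i => by simp [h]) N
    _ = 2 * cutWeight A N J := by
        rw [nsmul_eq_mul, Nat.cast_ofNat, cutWeight]
        refine congr_arg _ (sum_congr rfl fun j _ => ?_)
        rw [sum_filter]
        refine sum_congr rfl fun i hi => ?_
        simp only [h, Nat.dist_eq_sub_of_le (Nat.lt_succ_iff.mp (mem_range.mp hi))]

theorem disagreement_comp_rev (J : ℕ → ℝ) {N : ℕ} (σ : Fin N → ℝ) :
    disagreement J (σ ∘ Fin.rev) = disagreement J σ := by
  unfold disagreement
  rw [← Equiv.sum_comp Fin.revPerm]
  refine sum_congr rfl fun i _ => ?_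
  rw [← Equiv.sum_comp Fin.revPerm]
  refine sum_congr rfl fun j _ => ?_
  have hdist : Nat.dist (Fin.rev i) (Fin.rev j) = Nat.dist i j := by
    simp only [Fin.val_rev, Nat.dist]; omega
  simp only [Function.comp_apply, Fin.revPerm_apply, Fin.rev_rev, ne_eq, Fin.rev_inj, hdist]

theorem IsConfig.ext {N : ℕ} {σ τ : Fin N → ℝ} (hσ : IsConfig σ) (hτ : IsConfig τ)
    (h : ∀ i, σ i = 1 ↔ τ i = 1) : σ = τ := by
  funext i
  have hi := h i
  rcases hσ i with hσi | hσi <;> rcases hτ i with hτi | hτi <;> rw [hσi, hτi] <;>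
    norm_num [hσi, hτi] at hi

theorem Lconf_eq_one_iff {N k : ℕ} {i : Fin N} : Lconf N k i = 1 ↔ (i : ℕ) < k := by
  unfold Lconf; split_ifs with h <;> norm_num [h]

theorem Rconf_eq_one_iff {N k : ℕ} {i : Fin N} : Rconf N k i = 1 ↔ N - k ≤ i := by
  unfold Rconf; split_ifs with h <;> norm_num [h]

theorem isConfig_Lconf (N k : ℕ) : IsConfig (Lconf N k) := fun i => by
  unfold Lconf; split_ifs <;> simp

theorem isConfig_Rconf (N k : ℕ) : IsConfig (Rconf N k) := fun i => by
  unfold Rconf; split_ifs <;> simp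

theorem Rconf_eq_Lconf_comp_rev (N k : ℕ) : Rconf N k = Lconf N k ∘ Fin.rev := by
  funext i
  simp only [Rconf, Lconf, Function.comp_apply, Fin.val_rev]
  exact if_congr (by omega) rfl rfl

noncomputable def plusSet {N : ℕ} (σ : Fin N → ℝ) : Finset ℕ :=
  (univ.filter fun i => σ i = 1).map Fin.valEmbedding

theorem coe_mem_plusSet {N : ℕ} {σ : Fin N → ℝ} (i : Fin N) :
    (i : ℕ) ∈ plusSet σ ↔ σ i = 1 := by
  simp [plusSet, Fin.val_inj]

theorem plusSet_subset_range {N : ℕ} (σ : Fin N → ℝ) : plusSet σ ⊆ range N := by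
  intro x hx
  simp only [plusSet, mem_map, Fin.valEmbedding_apply] at hx
  obtain ⟨i, _, rfl⟩ := hx
  exact mem_range.mpr i.isLt

theorem card_plusSet {N : ℕ} (σ : Fin N → ℝ) :
    #(plusSet σ) = #(univ.filter fun i => σ i = 1) :=
  card_map _

theorem disagreement_sum_eq_iff_general (N k : ℕ)
    (J : ℕ → ℝ) (hpos : ∀ n, 1 ≤ n → 0 < J n) (hdec : ∀ n, 1 ≤ n → J (n + 1) < J n)
    (σ : Fin N → ℝ) (hσ : IsConfig σ)
    (hcard : (Finset.univ.filter fun i => σ i = 1).card = k) :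
    (∑ i : Fin N, ∑ j : Fin N,
        if i ≠ j ∧ σ i ≠ σ j then J (Nat.dist (i : ℕ) (j : ℕ)) else 0) =
      2 * ∑ i ∈ Finset.range k, ∑ j ∈ Finset.Ico k N, J (j - i) ↔
      σ = Lconf N k ∨ σ = Rconf N k := by
  have hL : disagreement J (Lconf N k) = 2 * cutWeight (range k) N J :=
    disagreement_eq_two_mul_cutWeight J (isConfig_Lconf N k) fun _ =>
      mem_range.trans Lconf_eq_one_iff.symm
  change disagreement J σ = _ ↔ _
  rw [← cutWeight_range]
  constructor
  · intro h
    have hk : #(plusSet σ) = k := (card_plusSet σ).trans hcard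
    have hA := plusSet_subset_range σ
    rw [disagreement_eq_two_mul_cutWeight J hσ coe_mem_plusSet, ← hk] at h
    have h1 := crossings_one_le_of_cutWeight_le hA (fun n hn => (hpos n hn).le)
      (fun n hn => (hdec n hn).le) (hdec 1 le_rfl) (mul_left_cancel₀ two_ne_zero h).le
    rcases eq_range_or_eq_Ico_of_crossings_le_one hA (h1.trans (crossings_range_one_le_one _ _))
      with hσA | hσA <;> rw [hk] at hσA
    · refine .inl (hσ.ext (isConfig_Lconf N k) fun i => ?_)
      rw [← coe_mem_plusSet, Lconf_eq_one_iff, hσA, mem_range]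
    · refine .inr (hσ.ext (isConfig_Rconf N k) fun i => ?_)
      rw [← coe_mem_plusSet, Rconf_eq_one_iff, hσA, mem_Ico]
      exact and_iff_left i.isLt
  · rintro (rfl | rfl)
    · exact hL
    · rw [Rconf_eq_Lconf_comp_rev, disagreement_comp_rev, hL]

/-- Proposition 4.1 (equality case): for a configuration with exactly `k` plus spins,
equality `∑_{i≠j} J(|i-j|) 𝟙[σᵢ ≠ σⱼ] = 2 ∑_{i=1}^{k} ∑_{j=k+1}^{N} J(|i-j|)` holds
iff `σ = L^(k)` or `σ = R^(k)`. -/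
theorem disagreement_sum_eq_iff (N k : ℕ) (hN : 1 ≤ N) (hk : k ≤ N)
    (J : ℕ → ℝ) (hpos : ∀ n, 1 ≤ n → 0 < J n) (hdec : ∀ n, 1 ≤ n → J (n + 1) < J n)
    (σ : Fin N → ℝ) (hσ : IsConfig σ)
    (hcard : (Finset.univ.filter fun i => σ i = 1).card = k) :
    (∑ i : Fin N, ∑ j : Fin N,
        if i ≠ j ∧ σ i ≠ σ j then J (Nat.dist (i : ℕ) (j : ℕ)) else 0) =
      2 * ∑ i ∈ Finset.range k, ∑ j ∈ Finset.Ico k N, J (j - i) ↔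
      σ = Lconf N k ∨ σ = Rconf N k :=
  disagreement_sum_eq_iff_general N k J hpos hdec σ hσ hcard
end

section
/- Let J be positive and strictly decreasing, N ≥ 2, and h ∈ ℝ. For every configuration σ with exactly k plus spins, H(σ) ≥ 2 ∑_{i=1}^k ∑_{j=k+1}^N J(|i-j|) + h(N - 2k) - (1/2)∑_{i=1}^N ∑_{j=1}^N J(|i-j|), with equality if and only if σ = L^(k) or σ = R^(k). -/
/-!
Let `P` be the set of plus sites and `Q` its complement. Since `σᵢσⱼ = 1 - 2·[σᵢ ≠ σⱼ]`,
`H(σ) = 2 I(P, Q) + h(N - 2k) - S(all sites)`, where `I(P, Q)` is the interaction between `P` and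
`Q` and `S` the self-interaction of a set; moreover `I(P, Q) = S(P ∪ Q) - S(P) - S(Q)`. So it
suffices that among sets of a given size, intervals maximise the self-interaction when `J`
decreases. Adding to a set `T` a point `a` above it adds `∑_{i ∈ T} J(a - i)`, and the `|T|`
distances `a - i` are distinct positive integers, so this is at most `J 1 + ⋯ + J |T|`, the
increment for an interval. If `J` decreases strictly, equality forces `P` and `Q` to be intervals,
that is `σ = L^(k)` or `σ = R^(k)`.
-/

open Finset

lemma Finset.range_sdiff_range (k N : ℕ) : range N \ range k = Ico k N := by
  ext i
  simp only [mem_sdiff, mem_range, mem_Ico]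
  omega

lemma Finset.range_sdiff_Ico {m N : ℕ} (hm : m ≤ N) : range N \ Ico m N = range m := by
  ext i
  simp only [mem_sdiff, mem_range, mem_Ico]
  omega

lemma Finset.eq_range_or_eq_Ico_of_sdiff_eq_Ico {N k a b : ℕ} {P : Finset ℕ} (hP : P ⊆ range N)
    (ha : P = Ico a (a + k)) (hb : range N \ P = Ico b (b + (N - k))) :
    P = range k ∨ P = Ico (N - k) N := by
  by_cases h0 : 0 ∈ P
  · left
    rw [ha, mem_Ico] at h0
    rw [ha, range_eq_Ico, show a = 0 by omega, zero_add]
  · right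
    rcases N.eq_zero_or_pos with rfl | hN
    · simp_all
    have h0Q : 0 ∈ range N \ P := mem_sdiff.2 ⟨mem_range.2 hN, h0⟩
    rw [hb, mem_Ico] at h0Q
    rw [← Finset.sdiff_sdiff_eq_self hP, hb, show b = 0 by omega, zero_add, ← range_eq_Ico,
      range_sdiff_range]

lemma sum_sum_union {α M : Type*} [DecidableEq α] [AddCommMonoid M] {P Q : Finset α}
    (hPQ : Disjoint P Q) (f : α → α → M) :
    ∑ i ∈ P ∪ Q, ∑ j ∈ P ∪ Q, f i j =
      ∑ i ∈ P, ∑ j ∈ P, f i j + ∑ i ∈ Q, ∑ j ∈ Q, f i j +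
        ∑ i ∈ P, ∑ j ∈ Q, (f i j + f j i) := by
  simp only [sum_union hPQ, sum_add_distrib]
  rw [sum_comm (s := Q) (t := P)]
  abel

lemma Fin.sum_sum_univ_eq_sum_sum_range {M : Type*} [AddCommMonoid M] (f : ℕ → ℕ → M)
    (N : ℕ) :
    ∑ i : Fin N, ∑ j : Fin N, f i j = ∑ i ∈ range N, ∑ j ∈ range N, f i j := by
  simp only [Fin.sum_univ_eq_sum_range (f _),
    Fin.sum_univ_eq_sum_range (fun i => ∑ j ∈ range N, f i j)]

section Interaction

variable (w : ℕ → ℝ)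

noncomputable def selfInteraction (S : Finset ℕ) : ℝ :=
  ∑ i ∈ S, ∑ j ∈ S, if i < j then w (Nat.dist i j) else 0

noncomputable def interaction (P Q : Finset ℕ) : ℝ :=
  ∑ i ∈ P, ∑ j ∈ Q, w (Nat.dist i j)

variable {w}

lemma ite_lt_add_ite_gt {i j : ℕ} (hij : i ≠ j) :
    ((if i < j then w (Nat.dist i j) else 0) + if j < i then w (Nat.dist j i) else 0) =
      w (Nat.dist i j) := by
  rcases hij.lt_or_gt with h | h
  · simp [h, h.not_gt]
  · simp [h, h.not_gt, Nat.dist_comm]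

lemma selfInteraction_insert {a : ℕ} {S : Finset ℕ} (hS : ∀ i ∈ S, i < a) :
    selfInteraction w (insert a S) = selfInteraction w S + ∑ i ∈ S, w (a - i) := by
  have haS : a ∉ S := fun h => lt_irrefl a (hS a h)
  have hrow : ∑ j ∈ S, (if a < j then w (Nat.dist a j) else 0) = 0 :=
    sum_eq_zero fun j hj => if_neg (hS j hj).not_gt
  have hi : ∀ i ∈ S, (if i < a then w (Nat.dist i a) else 0) = w (a - i) := fun i hi => by
    rw [if_pos (hS i hi), Nat.dist_eq_sub_of_le (hS i hi).le]
  simp only [selfInteraction, sum_insert haS, lt_irrefl, if_false, hrow, sum_add_distrib,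
    sum_congr rfl hi]
  ring

lemma selfInteraction_union {P Q : Finset ℕ} (hPQ : Disjoint P Q) :
    selfInteraction w (P ∪ Q) =
      selfInteraction w P + selfInteraction w Q + interaction w P Q := by
  rw [selfInteraction, sum_sum_union hPQ]
  congr 1
  refine sum_congr rfl fun i hi => sum_congr rfl fun j hj => ?_
  exact ite_lt_add_ite_gt fun h => disjoint_left.1 hPQ hi (h ▸ hj)

lemma interaction_sdiff {P S : Finset ℕ} (hP : P ⊆ S) :
    interaction w P (S \ P) =
      selfInteraction w S - selfInteraction w P - selfInteraction w (S \ P) := by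
  rw [← union_sdiff_of_subset hP, selfInteraction_union disjoint_sdiff, union_sdiff_of_subset hP]
  ring

lemma selfInteraction_Ico (a l : ℕ) :
    selfInteraction w (Ico a (a + l)) = selfInteraction w (range l) := by
  have : Ico a (a + l) = (range l).map (addLeftEmbedding a) := by
    rw [range_eq_Ico, map_add_left_Ico, add_zero]
  simp [this, selfInteraction, Nat.dist_add_add_left]

lemma interaction_range_Ico {k N : ℕ} (hk : k ≤ N) :
    interaction w (range k) (Ico k N) =
      selfInteraction w (range N) - selfInteraction w (range k) -
        selfInteraction w (range (N - k)) := by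
  rw [← range_sdiff_range, interaction_sdiff (range_subset_range.2 hk), range_sdiff_range,
    ← selfInteraction_Ico k (N - k), Nat.add_sub_cancel' hk]

lemma sum_sum_ite_ne (S : Finset ℕ) :
    ∑ i ∈ S, ∑ j ∈ S, (if i ≠ j then w (Nat.dist i j) else 0) =
      2 * selfInteraction w S := by
  have hsplit : ∀ i j : ℕ, (if i ≠ j then w (Nat.dist i j) else 0) =
      (if i < j then w (Nat.dist i j) else 0) + if j < i then w (Nat.dist j i) else 0 := by
    intro i j
    by_cases hij : i = j
    · simp [hij]
    · rw [if_pos hij, ite_lt_add_ite_gt hij]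
  simp only [hsplit, sum_add_distrib]
  rw [sum_comm (f := fun i j => if j < i then w (Nat.dist j i) else 0), selfInteraction]
  ring

lemma sum_range_sum_Ico_sub (k N : ℕ) :
    ∑ i ∈ range k, ∑ j ∈ Ico k N, w (j - i) = interaction w (range k) (Ico k N) :=
  sum_congr rfl fun i hi => sum_congr rfl fun j hj => by
    rw [Nat.dist_eq_sub_of_le (by simp at hi hj; omega)]

lemma sum_sub_le_sum_range_card (hw : AntitoneOn w (Set.Ici 1)) {a : ℕ} (S : Finset ℕ)
    (hS : ∀ i ∈ S, i < a) :
    ∑ i ∈ S, w (a - i) ≤ ∑ i ∈ range #S, w (#S - i) := by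
  induction S using Finset.induction_on_min with
  | empty => simp
  | insert b S hb ih =>
    have hbS : b ∉ S := fun h => lt_irrefl b (hb b h)
    have hcard : #S + 1 ≤ a - b := by
      have hsub : S ⊆ Ioo b a := fun i hi => mem_Ioo.2 ⟨hb i hi, hS i (mem_insert_of_mem hi)⟩
      have hba := hS b (mem_insert_self b S)
      have := card_le_card hsub
      rw [Nat.card_Ioo] at this
      omega
    rw [sum_insert hbS, card_insert_of_notMem hbS, sum_range_succ', add_comm]
    simp only [Nat.add_sub_add_right]
    gcongr
    · exact ih fun i hi => hS i (mem_insert_of_mem hi)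
    · exact hw (by simp) (by simp; omega) (by simpa using hcard)

lemma eq_Ico_of_sum_sub_eq (hw : StrictAntiOn w (Set.Ici 1)) {a : ℕ} {S : Finset ℕ}
    (hS : ∀ i ∈ S, i < a) (heq : ∑ i ∈ S, w (a - i) = ∑ i ∈ range #S, w (#S - i)) :
    S = Ico (a - #S) a := by
  rcases S.eq_empty_or_nonempty with rfl | hne
  · simp
  set b := S.min' hne
  have hb : b ∈ S := S.min'_mem hne
  have hbS : b ∉ S.erase b := notMem_erase b S
  have hcard : #S ≤ a - b := by
    have : S ⊆ Ico b a := fun i hi => mem_Ico.2 ⟨S.min'_le i hi, hS i hi⟩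
    simpa using card_le_card this
  have hrest := sum_sub_le_sum_range_card hw.antitoneOn (S.erase b)
    fun i hi => hS i (mem_of_mem_erase hi)
  have hl : #S = #(S.erase b) + 1 := (card_erase_add_one hb).symm
  rw [← insert_erase hb, sum_insert hbS, card_insert_of_notMem hbS, sum_range_succ', add_comm]
    at heq
  simp only [Nat.add_sub_add_right, Nat.sub_zero] at heq
  have hdist : a - b = #S := by
    by_contra hne'
    have : w (a - b) < w (#(S.erase b) + 1) := hw (by simp) (by simp; omega) (by omega)
    linarith
  have hsub : S ⊆ Ico (a - #S) a := fun i hi =>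
    mem_Ico.2 ⟨by have := S.min'_le i hi; omega, hS i hi⟩
  exact eq_of_subset_of_card_le hsub (by simp; omega)

lemma selfInteraction_le_range_card (hw : AntitoneOn w (Set.Ici 1)) (S : Finset ℕ) :
    selfInteraction w S ≤ selfInteraction w (range #S) := by
  induction S using Finset.induction_on_max with
  | empty => simp
  | insert a S ha ih =>
    have haS : a ∉ S := fun h => lt_irrefl a (ha a h)
    rw [card_insert_of_notMem haS, range_add_one, selfInteraction_insert ha,
      selfInteraction_insert fun i => mem_range.1]
    gcongr
    exact sum_sub_le_sum_range_card hw S ha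

lemma exists_eq_Ico_of_selfInteraction_eq (hw : StrictAntiOn w (Set.Ici 1)) {S : Finset ℕ}
    (heq : selfInteraction w S = selfInteraction w (range #S)) : ∃ b, S = Ico b (b + #S) := by
  rcases S.eq_empty_or_nonempty with rfl | hne
  · exact ⟨0, by simp⟩
  set a := S.max' hne
  have ha : ∀ i ∈ S.erase a, i < a := fun i hi =>
    S.lt_max'_of_mem_erase_max' hne hi
  have haS : a ∉ S.erase a := notMem_erase a S
  have hS : S = insert a (S.erase a) := (insert_erase (S.max'_mem hne)).symm
  rw [hS, card_insert_of_notMem haS, range_add_one, selfInteraction_insert ha,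
    selfInteraction_insert fun i => mem_range.1] at heq
  have hself := selfInteraction_le_range_card hw.antitoneOn (S.erase a)
  have hnew := sum_sub_le_sum_range_card hw.antitoneOn (S.erase a) ha
  have hIco := eq_Ico_of_sum_sub_eq hw ha (by linarith)
  have hl : #(S.erase a) ≤ a := by
    have := congrArg card hIco
    simp only [Nat.card_Ico] at this
    omega
  have hcard : #S = #(S.erase a) + 1 := (card_erase_add_one (S.max'_mem hne)).symm
  refine ⟨a - #(S.erase a), ?_⟩
  conv_lhs => rw [hS, hIco, insert_Ico_right_eq_Ico_add_one (Nat.sub_le _ _)]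
  congr 1
  omega

theorem interaction_range_card_le (hw : AntitoneOn w (Set.Ici 1)) {N : ℕ} {P : Finset ℕ}
    (hP : P ⊆ range N) :
    interaction w (range #P) (Ico #P N) ≤ interaction w P (range N \ P) := by
  have hk : #P ≤ N := by simpa using card_le_card hP
  have hQ : #(range N \ P) = N - #P := by rw [card_sdiff_of_subset hP, card_range]
  have hselfP := selfInteraction_le_range_card hw P
  have hselfQ := selfInteraction_le_range_card hw (range N \ P)
  rw [hQ] at hselfQ
  rw [interaction_range_Ico hk, interaction_sdiff hP]
  linarith

theorem interaction_eq_iff (hw : StrictAntiOn w (Set.Ici 1)) {N : ℕ} {P : Finset ℕ}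
    (hP : P ⊆ range N) :
    interaction w P (range N \ P) = interaction w (range #P) (Ico #P N) ↔
      P = range #P ∨ P = Ico (N - #P) N := by
  obtain ⟨k, hk⟩ : ∃ k, #P = k := ⟨_, rfl⟩
  have hkN : k ≤ N := hk ▸ by simpa using card_le_card hP
  have hQ : #(range N \ P) = N - k := by rw [card_sdiff_of_subset hP, card_range, hk]
  rw [hk, interaction_range_Ico hkN, interaction_sdiff hP]
  constructor
  · intro heq
    have hselfP := selfInteraction_le_range_card hw.antitoneOn P
    have hselfQ := selfInteraction_le_range_card hw.antitoneOn (range N \ P)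
    rw [hk] at hselfP
    rw [hQ] at hselfQ
    obtain ⟨a, ha⟩ := exists_eq_Ico_of_selfInteraction_eq hw (S := P) (by rw [hk]; linarith)
    obtain ⟨b, hb⟩ := exists_eq_Ico_of_selfInteraction_eq hw (S := range N \ P)
      (by rw [hQ]; linarith)
    rw [hk] at ha
    rw [hQ] at hb
    exact eq_range_or_eq_Ico_of_sdiff_eq_Ico hP ha hb
  · rintro (rfl | rfl)
    · rw [range_sdiff_range, ← selfInteraction_Ico k (N - k), Nat.add_sub_cancel' hkN]
    · rw [range_sdiff_Ico (Nat.sub_le N k), ← selfInteraction_Ico (N - k) k,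
        Nat.sub_add_cancel hkN]

end Interaction

-- A configuration on `Fin N` is encoded by its set of plus sites, a subset of `range N`.
def spin (P : Finset ℕ) (i : ℕ) : ℝ := if i ∈ P then 1 else -1

lemma spin_eq_spin_iff {P P' : Finset ℕ} {i : ℕ} :
    spin P i = spin P' i ↔ (i ∈ P ↔ i ∈ P') := by
  unfold spin
  split_ifs <;> norm_num <;> tauto

lemma sum_spin {N : ℕ} {P : Finset ℕ} (hP : P ⊆ range N) :
    ∑ i ∈ range N, spin P i = 2 * #P - N := by
  have hspin : ∀ i, spin P i = 2 * (if i ∈ P then 1 else 0) - 1 := by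
    intro i
    unfold spin
    split_ifs <;> norm_num
  simp only [hspin, sum_sub_distrib, ← mul_sum, sum_ite_mem, inter_eq_right.2 hP]
  simp

lemma sum_sum_spin_mul_spin (w : ℕ → ℝ) {N : ℕ} {P : Finset ℕ} (hP : P ⊆ range N) :
    ∑ i ∈ range N, ∑ j ∈ range N,
        (if i < j then w (Nat.dist i j) * spin P i * spin P j else 0) =
      selfInteraction w (range N) - 2 * interaction w P (range N \ P) := by
  have hunion : P ∪ (range N \ P) = range N := union_sdiff_of_subset hP
  have hPP : ∀ i ∈ P, ∀ j ∈ P,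
      (if i < j then w (Nat.dist i j) * spin P i * spin P j else 0) =
        if i < j then w (Nat.dist i j) else 0 := fun i hi j hj => by simp [spin, hi, hj]
  have hQQ : ∀ i ∈ range N \ P, ∀ j ∈ range N \ P,
      (if i < j then w (Nat.dist i j) * spin P i * spin P j else 0) =
        if i < j then w (Nat.dist i j) else 0 := fun i hi j hj => by
    simp [spin, (mem_sdiff.1 hi).2, (mem_sdiff.1 hj).2]
  have hPQ : ∀ i ∈ P, ∀ j ∈ range N \ P,
      ((if i < j then w (Nat.dist i j) * spin P i * spin P j else 0) +
        if j < i then w (Nat.dist j i) * spin P j * spin P i else 0) = -w (Nat.dist i j) :=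
    fun i hi j hj => by
      rw [← ite_lt_add_ite_gt (w := w) fun h : i = j => (mem_sdiff.1 hj).2 (h ▸ hi)]
      simp only [spin, hi, (mem_sdiff.1 hj).2, if_true, if_false]
      split_ifs <;> first | omega | ring
  rw [← hunion, sum_sum_union disjoint_sdiff, selfInteraction_union disjoint_sdiff, hunion]
  simp only [selfInteraction, interaction]
  rw [sum_congr rfl fun i hi => sum_congr rfl (hPP i hi),
    sum_congr rfl fun i hi => sum_congr rfl (hQQ i hi),
    sum_congr rfl fun i hi => sum_congr rfl (hPQ i hi)]
  simp only [sum_neg_distrib]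
  ring

section Configurations

variable {N : ℕ}

noncomputable def plusSites (σ : Fin N → ℝ) : Finset ℕ :=
  (univ.filter fun i => σ i = 1).map Fin.valEmbedding

lemma plusSites_subset_range (σ : Fin N → ℝ) : plusSites σ ⊆ range N := by
  intro i hi
  obtain ⟨a, -, rfl⟩ := mem_map.1 hi
  exact mem_range.2 a.isLt

lemma card_plusSites (σ : Fin N → ℝ) : #(plusSites σ) = #(univ.filter fun i => σ i = 1) :=
  card_map _

lemma val_mem_plusSites {σ : Fin N → ℝ} {i : Fin N} :
    (i : ℕ) ∈ plusSites σ ↔ σ i = 1 := by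
  simp [plusSites, Fin.val_inj]

lemma spin_plusSites {σ : Fin N → ℝ} (hσ : IsConfig σ) :
    (fun i : Fin N => spin (plusSites σ) i) = σ := by
  funext i
  rcases hσ i with h | h <;> norm_num [spin, val_mem_plusSites, h]

lemma Lconf_eq_spin (N k : ℕ) : Lconf N k = fun i : Fin N => spin (range k) i := by
  funext i
  simp [Lconf, spin]

lemma Rconf_eq_spin (N k : ℕ) : Rconf N k = fun i : Fin N => spin (Ico (N - k) N) i := by
  funext i
  simp [Rconf, spin, i.isLt]

lemma spin_comp_val_inj {P P' : Finset ℕ} (hP : P ⊆ range N) (hP' : P' ⊆ range N) :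
    (fun i : Fin N => spin P i) = (fun i : Fin N => spin P' i) ↔ P = P' := by
  refine ⟨fun h => ?_, fun h => h ▸ rfl⟩
  ext i
  by_cases hi : i < N
  · exact spin_eq_spin_iff.1 (congrFun h ⟨i, hi⟩)
  · exact iff_of_false (fun h => hi (mem_range.1 (hP h))) fun h => hi (mem_range.1 (hP' h))

lemma H_spin (J : ℕ → ℝ) (h : ℝ) {P : Finset ℕ} (hP : P ⊆ range N) :
    H N J h (fun i => spin P i) =
      2 * interaction J P (range N \ P) + h * (N - 2 * #P) - selfInteraction J (range N) := by
  rw [H, Fin.sum_sum_univ_eq_sum_sum_range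
      (fun i j => if i < j then J (Nat.dist i j) * spin P i * spin P j else 0),
    Fin.sum_univ_eq_sum_range (spin P), sum_sum_spin_mul_spin J hP, sum_spin hP]
  ring

lemma half_sum_sum_ite_ne (J : ℕ → ℝ) :
    (1 / 2) * ∑ i : Fin N, ∑ j : Fin N, (if i ≠ j then J (Nat.dist i j) else 0) =
      selfInteraction J (range N) := by
  simp_rw [← Fin.val_ne_iff]
  rw [Fin.sum_sum_univ_eq_sum_sum_range (fun i j => if i ≠ j then J (Nat.dist i j) else 0),
    sum_sum_ite_ne]
  ring

end Configurations

theorem hamiltonian_lower_bound_general (N k : ℕ)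
    (J : ℕ → ℝ) (hdec : ∀ n, 1 ≤ n → J (n + 1) < J n)
    (h : ℝ) (σ : Fin N → ℝ) (hσ : IsConfig σ)
    (hcard : (Finset.univ.filter fun i => σ i = 1).card = k) :
    (2 * (∑ i ∈ Finset.range k, ∑ j ∈ Finset.Ico k N, J (j - i))
        + h * ((N : ℝ) - 2 * k)
        - (1 / 2) * ∑ i : Fin N, ∑ j : Fin N,
            (if i ≠ j then J (Nat.dist (i : ℕ) (j : ℕ)) else 0)
      ≤ H N J h σ) ∧
    (H N J h σ =
        2 * (∑ i ∈ Finset.range k, ∑ j ∈ Finset.Ico k N, J (j - i))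
          + h * ((N : ℝ) - 2 * k)
          - (1 / 2) * ∑ i : Fin N, ∑ j : Fin N,
              (if i ≠ j then J (Nat.dist (i : ℕ) (j : ℕ)) else 0) ↔
      σ = Lconf N k ∨ σ = Rconf N k) := by
  have hJ : StrictAntiOn J (Set.Ici 1) := strictAntiOn_Ici_of_lt_pred fun m hm => by
    obtain ⟨n, rfl⟩ : ∃ n, m = n + 1 := ⟨m - 1, by omega⟩
    simpa using hdec n (by omega)
  obtain ⟨P, hPN, rfl, rfl⟩ : ∃ P ⊆ range N, #P = k ∧ (fun i : Fin N => spin P i) = σ :=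
    ⟨plusSites σ, plusSites_subset_range σ, (card_plusSites σ).trans hcard, spin_plusSites hσ⟩
  have hkN : #P ≤ N := by simpa using card_le_card hPN
  have hIco : Ico (N - #P) N ⊆ range N := fun i hi => mem_range.2 (mem_Ico.1 hi).2
  rw [H_spin J h hPN, half_sum_sum_ite_ne, sum_range_sum_Ico_sub, Lconf_eq_spin, Rconf_eq_spin,
    spin_comp_val_inj hPN (range_subset_range.2 hkN), spin_comp_val_inj hPN hIco,
    ← interaction_eq_iff hJ hPN]
  have hle := interaction_range_card_le hJ.antitoneOn hPN
  exact ⟨by linarith, ⟨fun heq => by linarith, fun heq => by linarith⟩⟩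

/-- Theorem 4.2: for any configuration with exactly `k` plus spins,
`H(σ) ≥ 2 ∑_{i=1}^{k} ∑_{j=k+1}^{N} J(|i-j|) + h (N - 2k) - (1/2) ∑_{i≠j} J(|i-j|)`,
with equality iff `σ = L^(k)` or `σ = R^(k)`. -/
theorem hamiltonian_lower_bound (N k : ℕ) (hN : 2 ≤ N) (hk : k ≤ N)
    (J : ℕ → ℝ) (hpos : ∀ n, 1 ≤ n → 0 < J n) (hdec : ∀ n, 1 ≤ n → J (n + 1) < J n)
    (h : ℝ) (σ : Fin N → ℝ) (hσ : IsConfig σ)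
    (hcard : (Finset.univ.filter fun i => σ i = 1).card = k) :
    (2 * (∑ i ∈ Finset.range k, ∑ j ∈ Finset.Ico k N, J (j - i))
        + h * ((N : ℝ) - 2 * k)
        - (1 / 2) * ∑ i : Fin N, ∑ j : Fin N,
            (if i ≠ j then J (Nat.dist (i : ℕ) (j : ℕ)) else 0)
      ≤ H N J h σ) ∧
    (H N J h σ =
        2 * (∑ i ∈ Finset.range k, ∑ j ∈ Finset.Ico k N, J (j - i))
          + h * ((N : ℝ) - 2 * k)
          - (1 / 2) * ∑ i : Fin N, ∑ j : Fin N,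
              (if i ≠ j then J (Nat.dist (i : ℕ) (j : ℕ)) else 0) ↔
      σ = Lconf N k ∨ σ = Rconf N k) :=
  hamiltonian_lower_bound_general N k J hdec h σ hσ hcard
end

section
/- Define f(k) = H(L^(k)) for k ∈ {0,...,N}. Then for 0 ≤ k ≤ N-1, f(k+1) - f(k) = 2( ∑_{n=1}^{N-k-1} J(n) - ∑_{n=1}^{k} J(n) - h ). -/
open Finset

lemma sum_shift (J : ℕ → ℝ) (k N : ℕ) (hk : k < N) :
    ∑ j ∈ Ioo k N, J (j - k) = ∑ n ∈ Icc 1 (N - k - 1), J n := by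
  apply Finset.sum_nbij' (i := fun j => j - k) (j := fun n => n + k)
  · intro a ha; simp only [mem_Ioo] at ha; simp only [mem_Icc]; omega
  · intro a ha; simp only [mem_Icc] at ha; simp only [mem_Ioo]; omega
  · intro a ha; simp only [mem_Ioo] at ha; omega
  · intro a ha; simp only [mem_Icc] at ha; omega
  · intro a ha; rfl

lemma sum_reflect (J : ℕ → ℝ) (k : ℕ) :
    ∑ i ∈ range k, J (k - i) = ∑ n ∈ Icc 1 k, J n := by
  apply Finset.sum_nbij' (i := fun i => k - i) (j := fun n => k - n)
  · intro a ha; simp only [mem_range] at ha; simp only [mem_Icc]; omega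
  · intro a ha; simp only [mem_Icc] at ha; simp only [mem_range]; omega
  · intro a ha; simp only [mem_range] at ha; omega
  · intro a ha; simp only [mem_Icc] at ha; omega
  · intro a ha; rfl

/-- First difference of `f(k) = H(L^(k))`:
`f(k+1) - f(k) = 2 (∑_{n=1}^{N-k-1} J(n) - ∑_{n=1}^{k} J(n) - h)`. -/
theorem first_difference (N : ℕ) (hN : 2 ≤ N) (J : ℕ → ℝ) (h : ℝ)
    (k : ℕ) (hk : k ≤ N - 1) :
    H N J h (Lconf N (k + 1)) - H N J h (Lconf N k) =
      2 * ((∑ n ∈ Finset.Icc 1 (N - k - 1), J n) - (∑ n ∈ Finset.Icc 1 k, J n) - h) := by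
  have hkN : k < N := by omega
  set kf : Fin N := ⟨k, hkN⟩ with hkf
  set σ := Lconf N k with hσ
  set τ := Lconf N (k + 1) with hτ
  set g : Fin N → Fin N → ℝ := fun i j =>
    (if (i : ℕ) < (j : ℕ) then J (Nat.dist (i : ℕ) (j : ℕ)) * τ i * τ j else 0) -
    (if (i : ℕ) < (j : ℕ) then J (Nat.dist (i : ℕ) (j : ℕ)) * σ i * σ j else 0) with hg
  have hts : ∀ i : Fin N, (i : ℕ) ≠ k → τ i = σ i := by
    intro i hi
    simp only [hτ, hσ, Lconf]
    by_cases hlt : (i : ℕ) < k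
    · rw [if_pos hlt, if_pos (by omega)]
    · rw [if_neg hlt, if_neg (by omega)]
  have hτk : τ kf = 1 := by simp [hτ, Lconf, hkf]
  have hσk : σ kf = -1 := by simp [hσ, Lconf, hkf]
  have key : H N J h τ - H N J h σ =
      -(∑ i : Fin N, ∑ j : Fin N, g i j) - h * (∑ i : Fin N, (τ i - σ i)) := by
    simp only [H, hg, Finset.sum_sub_distrib]
    ring
  have hfield : (∑ i : Fin N, (τ i - σ i)) = 2 := by
    rw [Finset.sum_eq_single kf]
    · rw [hτk, hσk]; norm_num
    · intro j _ hj
      rw [hts j (fun hc => hj (Fin.ext hc)), sub_self]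
    · intro hmem; exact absurd (mem_univ kf) hmem
  have hgzero : ∀ i j : Fin N, (i : ℕ) ≠ k → (j : ℕ) ≠ k → g i j = 0 := by
    intro i j hi hj
    simp only [hg]
    rw [hts i hi, hts j hj, sub_self]
  have hgkk : g kf kf = 0 := by simp [hg]
  have hsplit : (∑ i : Fin N, ∑ j : Fin N, g i j) =
      (∑ j : Fin N, g kf j) + ∑ i : Fin N, g i kf := by
    rw [← Finset.add_sum_erase _ _ (mem_univ kf)]
    congr 1
    have hcongr : ∀ i ∈ univ.erase kf, (∑ j : Fin N, g i j) = g i kf := by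
      intro i hi
      have hik : (i : ℕ) ≠ k := fun hc => (mem_erase.mp hi).1 (Fin.ext hc)
      apply Finset.sum_eq_single
      · intro j _ hj; exact hgzero i j hik (fun hc => hj (Fin.ext hc))
      · intro hmem; exact absurd (mem_univ kf) hmem
    rw [Finset.sum_congr rfl hcongr, Finset.sum_erase_eq_sub (mem_univ kf), hgkk, sub_zero]
  have h1 : ∀ j : Fin N, g kf j = if k < (j : ℕ) then -2 * J ((j : ℕ) - k) else 0 := by
    intro j
    by_cases hj : k < (j : ℕ)
    · rw [if_pos hj]
      have hτj : τ j = -1 := by simp only [hτ, Lconf]; rw [if_neg (by omega)]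
      have hσj : σ j = -1 := by simp only [hσ, Lconf]; rw [if_neg (by omega)]
      have hd : Nat.dist ((kf : ℕ)) ((j : ℕ)) = (j : ℕ) - k :=
        Nat.dist_eq_sub_of_le hj.le
      simp only [hg]
      rw [if_pos hj, if_pos hj, hτk, hσk, hτj, hσj, hd]
      ring
    · rw [if_neg hj]
      simp only [hg]
      rw [if_neg hj, if_neg hj, sub_self]
  have h2 : ∀ i : Fin N, g i kf = if (i : ℕ) < k then 2 * J (k - (i : ℕ)) else 0 := by
    intro i
    by_cases hi : (i : ℕ) < k
    · rw [if_pos hi]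
      have hτi : τ i = 1 := by simp only [hτ, Lconf]; rw [if_pos (by omega)]
      have hσi : σ i = 1 := by simp only [hσ, Lconf]; rw [if_pos hi]
      have hd : Nat.dist ((i : ℕ)) ((kf : ℕ)) = k - (i : ℕ) :=
        Nat.dist_eq_sub_of_le hi.le
      simp only [hg]
      rw [if_pos hi, if_pos hi, hτk, hσk, hτi, hσi, hd]
      ring
    · rw [if_neg hi]
      have hnc : ¬ ((i : ℕ) < k) := hi
      simp only [hg]
      rw [if_neg hnc, if_neg hnc, sub_self]
  have h1' : (∑ j : Fin N, g kf j) = -2 * ∑ n ∈ Icc 1 (N - k - 1), J n := by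
    simp only [h1]
    rw [Fin.sum_univ_eq_sum_range (fun j => if k < j then -2 * J (j - k) else 0) N,
      ← Finset.sum_filter]
    have hfil : (range N).filter (fun j => k < j) = Ioo k N := by
      ext j; simp only [mem_filter, mem_range, mem_Ioo]; omega
    rw [hfil, ← Finset.mul_sum, sum_shift J k N hkN]
  have h2' : (∑ i : Fin N, g i kf) = 2 * ∑ n ∈ Icc 1 k, J n := by
    simp only [h2]
    rw [Fin.sum_univ_eq_sum_range (fun i => if i < k then 2 * J (k - i) else 0) N,
      ← Finset.sum_filter]
    have hfil : (range N).filter (fun i => i < k) = range k := by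
      ext i; simp only [mem_filter, mem_range]; omega
    rw [hfil, ← Finset.mul_sum, sum_reflect J k]
  rw [key, hsplit, h1', h2', hfield]
  ring
end

section
/- Define f(k) = H(L^(k)). Then the second difference satisfies f(k+2) - 2f(k+1) + f(k) = -2(J(N-k-1) + J(k+1)) for all 0 ≤ k ≤ N-2; in particular, if J is positive then f is strictly concave as a sequence. -/
open Finset

/-- ℕ-indexed version of the spin values of `Lconf`. -/
noncomputable def Lk (k : ℕ) (i : ℕ) : ℝ := if i < k then 1 else -1

/-- The pair-interaction sum, as a sum over `range N`. -/
noncomputable def G (N : ℕ) (J : ℕ → ℝ) (k : ℕ) : ℝ :=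
  ∑ i ∈ range N, ∑ j ∈ range N, if i < j then J (j - i) * Lk k i * Lk k j else 0

/-- Total magnetization of `L^(k)`. -/
noncomputable def Sg (N k : ℕ) : ℝ := ∑ i ∈ range N, Lk k i

/-- Partial sums of `J`. -/
noncomputable def Sd (J : ℕ → ℝ) (n : ℕ) : ℝ := ∑ d ∈ range n, J (d + 1)

lemma tail_sum (f : ℕ → ℝ) : ∀ N m : ℕ,
    (∑ j ∈ range N, if m < j then f (j - m) else 0) = ∑ d ∈ range (N - 1 - m), f (d + 1) := by
  intro N
  induction N with
  | zero => intro m; simp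
  | succ n ih =>
    intro m
    rw [Finset.sum_range_succ, ih]
    by_cases hmn : m < n
    · rw [if_pos hmn, show n + 1 - 1 - m = (n - 1 - m) + 1 by omega, Finset.sum_range_succ,
        show n - m = n - 1 - m + 1 by omega]
    · rw [if_neg hmn, add_zero, show n + 1 - 1 - m = n - 1 - m by omega]

lemma head_sum (f : ℕ → ℝ) (N m : ℕ) (hm : m ≤ N) :
    (∑ i ∈ range N, if i < m then f (m - i) else 0) = ∑ d ∈ range m, f (d + 1) := by
  rw [← Finset.sum_subset (Finset.range_subset_range.2 hm)
    (fun x _ hx => if_neg (by rw [Finset.mem_range] at hx; omega))]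
  rw [Finset.sum_congr rfl (fun i hi => if_pos (Finset.mem_range.1 hi))]
  rw [← Finset.sum_range_reflect (fun d => f (d + 1)) m]
  refine Finset.sum_congr rfl fun i hi => ?_
  rw [Finset.mem_range] at hi
  rw [show m - 1 - i + 1 = m - i by omega]

lemma finsum2 (N : ℕ) (f : ℕ → ℕ → ℝ) :
    (∑ i : Fin N, ∑ j : Fin N, f (i : ℕ) (j : ℕ)) = ∑ i ∈ range N, ∑ j ∈ range N, f i j := by
  rw [← Fin.sum_univ_eq_sum_range (fun i => ∑ j ∈ range N, f i j) N]
  exact Finset.sum_congr rfl fun i _ => Fin.sum_univ_eq_sum_range (fun j => f i j) N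

lemma Hform (N : ℕ) (J : ℕ → ℝ) (h : ℝ) (k : ℕ) :
    H N J h (Lconf N k) = -(G N J k) - h * Sg N k := by
  unfold H
  have hL : ∀ i : Fin N, Lconf N k i = Lk k (i : ℕ) := fun i => rfl
  simp only [hL]
  rw [finsum2 N (fun a b => if a < b then J (Nat.dist a b) * Lk k a * Lk k b else 0),
    Fin.sum_univ_eq_sum_range (fun i => Lk k i) N]
  unfold G Sg
  congr 2
  refine Finset.sum_congr rfl fun i _ => Finset.sum_congr rfl fun j _ => ?_
  split_ifs with hij
  · rw [Nat.dist_eq_sub_of_le hij.le]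
  · rfl

lemma Gstep (N : ℕ) (J : ℕ → ℝ) (m : ℕ) (hm : m < N) :
    G N J (m + 1) - G N J m = 2 * Sd J m - 2 * Sd J (N - 1 - m) := by
  unfold G
  rw [← Finset.sum_sub_distrib]
  have key : ∀ i ∈ range N,
      ((∑ j ∈ range N, if i < j then J (j - i) * Lk (m+1) i * Lk (m+1) j else 0) -
       (∑ j ∈ range N, if i < j then J (j - i) * Lk m i * Lk m j else 0)) =
      ∑ j ∈ range N,
        ((if i = m then (if m < j then (-2) * J (j - m) else 0) else 0) +
         (if j = m then (if i < m then 2 * J (m - i) else 0) else 0)) := by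
    intro i _
    rw [← Finset.sum_sub_distrib]
    refine Finset.sum_congr rfl fun j _ => ?_
    unfold Lk
    split_ifs <;> (first | (subst_vars; ring1) | (exfalso; omega))
  rw [Finset.sum_congr rfl key]
  simp only [Finset.sum_add_distrib]
  have T1 : (∑ i ∈ range N, ∑ j ∈ range N,
      if i = m then (if m < j then (-2) * J (j - m) else 0) else 0)
      = -2 * Sd J (N - 1 - m) := by
    rw [Finset.sum_eq_single_of_mem m (Finset.mem_range.2 hm)
      (fun i _ hi => Finset.sum_eq_zero fun j _ => if_neg hi)]
    simp only [eq_self_iff_true, if_true]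
    rw [tail_sum (fun x => (-2) * J x) N m]
    unfold Sd
    rw [Finset.mul_sum]
  have T2 : (∑ i ∈ range N, ∑ j ∈ range N,
      if j = m then (if i < m then 2 * J (m - i) else 0) else 0)
      = 2 * Sd J m := by
    have inner : ∀ i, (∑ j ∈ range N,
        if j = m then (if i < m then 2 * J (m - i) else 0) else 0)
        = (if i < m then 2 * J (m - i) else 0) := by
      intro i
      rw [Finset.sum_ite_eq' (range N) m (fun _ => if i < m then 2 * J (m - i) else 0),
        if_pos (Finset.mem_range.2 hm)]
    simp only [inner]
    rw [head_sum (fun x => 2 * J x) N m hm.le]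
    unfold Sd
    rw [Finset.mul_sum]
  rw [T1, T2]
  ring

lemma Sgstep (N k : ℕ) (hk : k < N) : Sg N (k + 1) - Sg N k = 2 := by
  unfold Sg
  rw [← Finset.sum_sub_distrib]
  have key : ∀ i ∈ range N, Lk (k+1) i - Lk k i = if i = k then 2 else 0 := by
    intro i _
    unfold Lk
    split_ifs <;> (first | ring1 | (exfalso; omega))
  rw [Finset.sum_congr rfl key,
    Finset.sum_ite_eq' (range N) k (fun _ => (2:ℝ)), if_pos (Finset.mem_range.2 hk)]

/-- Second difference of `f(k) = H(L^(k))`: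
`f(k+2) - 2 f(k+1) + f(k) = -2 (J(N-k-1) + J(k+1))`, which is negative when `J` is
positive, so `f` is strictly concave as a sequence. -/
theorem second_difference (N : ℕ) (hN : 2 ≤ N) (J : ℕ → ℝ)
    (hpos : ∀ n, 1 ≤ n → 0 < J n) (h : ℝ) (k : ℕ) (hk : k ≤ N - 2) :
    (H N J h (Lconf N (k + 2)) - 2 * H N J h (Lconf N (k + 1)) + H N J h (Lconf N k) =
        -2 * (J (N - k - 1) + J (k + 1))) ∧
      (H N J h (Lconf N (k + 2)) - 2 * H N J h (Lconf N (k + 1)) + H N J h (Lconf N k) < 0) := by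
  have heq : H N J h (Lconf N (k + 2)) - 2 * H N J h (Lconf N (k + 1)) + H N J h (Lconf N k) =
      -2 * (J (N - k - 1) + J (k + 1)) := by
    rw [Hform, Hform, Hform]
    have g1 := Gstep N J k (by omega)
    have g2 := Gstep N J (k + 1) (by omega)
    have s1 := Sgstep N k (by omega)
    have s2 := Sgstep N (k + 1) (by omega)
    rw [show N - 1 - (k + 1) = N - 2 - k by omega] at g2
    have hSd1 : Sd J (k + 1) = Sd J k + J (k + 1) := Finset.sum_range_succ _ _
    have hSd2 : Sd J (N - 1 - k) = Sd J (N - 2 - k) + J (N - 1 - k) := by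
      rw [show N - 1 - k = N - 2 - k + 1 by omega]
      exact Finset.sum_range_succ _ _
    have hs : h * Sg N (k + 2) - 2 * (h * Sg N (k + 1)) + h * Sg N k = 0 := by
      have hr : h * Sg N (k + 2) - 2 * (h * Sg N (k + 1)) + h * Sg N k
          = h * ((Sg N (k + 2) - Sg N (k + 1)) - (Sg N (k + 1) - Sg N k)) := by ring
      rw [hr, s1]
      rw [show k + 1 + 1 = k + 2 by ring] at s2
      rw [s2]
      ring
    rw [show N - k - 1 = N - 1 - k by omega]
    have hg2' : G N J (k + 2) - G N J (k + 1) = 2 * Sd J (k + 1) - 2 * Sd J (N - 2 - k) := by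
      rw [show k + 2 = k + 1 + 1 by ring]; exact g2
    linarith [hg2', g1, hs, hSd1, hSd2]
  refine ⟨heq, ?_⟩
  rw [heq]
  have h1 := hpos (N - k - 1) (by omega)
  have h2 := hpos (k + 1) (by omega)
  linarith
end

section
/- Assume J positive and strictly decreasing and 0 < h < ∑_{n=1}^{N-1} J(n). Then f(0) < f(1) and f(⌊N/2⌋) > f(⌊N/2⌋+1) > ... > f(N), where f(k) = H(L^(k)); consequently f attains its maximum at some k₀ with 1 ≤ k₀ ≤ ⌊N/2⌋. -/
open Finset

lemma sumA (N : ℕ) (J : ℕ → ℝ) {k : ℕ} (hk : k ≤ N) :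
    ∑ i : Fin N, (if (i:ℕ) < k then J (k - (i:ℕ)) else 0) = ∑ d ∈ Icc 1 k, J d := by
  rw [Fin.sum_univ_eq_sum_range (fun i => if i < k then J (k - i) else 0), ← Finset.sum_filter]
  have hf : (range N).filter (· < k) = range k := by ext i; simp; omega
  rw [hf]
  refine Finset.sum_nbij' (fun i => k - i) (fun d => k - d) ?_ ?_ ?_ ?_ ?_ <;>
    intro a ha <;> simp at ha ⊢ <;> omega

lemma sumB (N : ℕ) (J : ℕ → ℝ) {k : ℕ} (hk : k < N) :
    ∑ j : Fin N, (if k < (j:ℕ) then J ((j:ℕ) - k) else 0) = ∑ d ∈ Icc 1 (N - 1 - k), J d := by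
  rw [Fin.sum_univ_eq_sum_range (fun j => if k < j then J (j - k) else 0), ← Finset.sum_filter]
  refine Finset.sum_nbij' (fun j => j - k) (fun d => d + k) ?_ ?_ ?_ ?_ ?_ <;>
    intro a ha <;> simp at ha ⊢ <;> omega

lemma step (N : ℕ) (J : ℕ → ℝ) (h : ℝ) {k : ℕ} (hk : k < N) :
    H N J h (Lconf N (k+1)) =
      H N J h (Lconf N k) + 2 * (∑ d ∈ Icc 1 (N - 1 - k), J d)
        - 2 * (∑ d ∈ Icc 1 k, J d) - 2 * h := by
  set K : Fin N := ⟨k, hk⟩ with hK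
  have hKval : ((K : Fin N) : ℕ) = k := rfl
  set σ := Lconf N k with hσ
  set σ' := Lconf N (k+1) with hσ'
  have hsame : ∀ i : Fin N, i ≠ K → σ' i = σ i := by
    intro i hi
    have : (i : ℕ) ≠ k := fun hc => hi (Fin.ext hc)
    simp only [hσ, hσ', Lconf]
    by_cases h1 : (i:ℕ) < k
    · rw [if_pos h1, if_pos (by omega)]
    · rw [if_neg h1, if_neg (by omega)]
  have hσ'K : σ' K = 1 := by
    simp only [hσ', Lconf, hKval]; rw [if_pos (by omega)]
  have hσK : σ K = -1 := by
    simp only [hσ, Lconf, hKval]; rw [if_neg (by omega)]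
  set t : Fin N → Fin N → ℝ := fun i j =>
    if (i : ℕ) < (j : ℕ) then J (Nat.dist (i : ℕ) (j : ℕ)) * σ i * σ j else 0 with ht
  set t' : Fin N → Fin N → ℝ := fun i j =>
    if (i : ℕ) < (j : ℕ) then J (Nat.dist (i : ℕ) (j : ℕ)) * σ' i * σ' j else 0 with ht'
  set D : Fin N → Fin N → ℝ := fun i j => t' i j - t i j with hD
  have hDzero : ∀ i j : Fin N, i ≠ K → j ≠ K → D i j = 0 := by
    intro i j hi hj
    simp only [hD, ht, ht', hsame i hi, hsame j hj, sub_self]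
  have hDKK : D K K = 0 := by simp [hD, ht, ht']
  have hDKj : ∀ j : Fin N, D K j = if k < (j:ℕ) then -2 * J ((j:ℕ) - k) else 0 := by
    intro j
    simp only [hD, ht, ht', hKval]
    by_cases hj : k < (j : ℕ)
    · have hσj : σ j = -1 := by
        simp only [hσ, Lconf]; rw [if_neg (by omega)]
      have hσ'j : σ' j = -1 := by
        simp only [hσ', Lconf]; rw [if_neg (by omega)]
      rw [if_pos hj, if_pos hj, if_pos hj, hσ'K, hσK, hσj, hσ'j,
        Nat.dist_eq_sub_of_le (le_of_lt hj)]
      ring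
    · rw [if_neg hj, if_neg hj, if_neg hj]
      ring
  have hDiK : ∀ i : Fin N, D i K = if (i:ℕ) < k then 2 * J (k - (i:ℕ)) else 0 := by
    intro i
    simp only [hD, ht, ht', hKval]
    by_cases hi : (i : ℕ) < k
    · have hσi : σ i = 1 := by
        simp only [hσ, Lconf]; rw [if_pos hi]
      have hσ'i : σ' i = 1 := by
        simp only [hσ', Lconf]; rw [if_pos (by omega)]
      rw [if_pos hi, if_pos hi, if_pos hi, hσ'K, hσK, hσi, hσ'i,
        Nat.dist_eq_sub_of_le (le_of_lt hi)]
      ring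
    · rw [if_neg hi, if_neg hi, if_neg hi]
      ring
  have hDsum : ∑ i : Fin N, ∑ j : Fin N, D i j = (∑ j : Fin N, D K j) + ∑ i : Fin N, D i K := by
    have hrow : ∀ i : Fin N, i ≠ K → ∑ j : Fin N, D i j = D i K := by
      intro i hi
      exact Fintype.sum_eq_single K (fun j hj => hDzero i j hi hj)
    rw [← Finset.add_sum_erase _ _ (mem_univ K)]
    congr 1
    rw [Finset.sum_congr rfl (fun i hi => hrow i (Finset.ne_of_mem_erase hi)),
      Finset.sum_erase_eq_sub (mem_univ K), hDKK, sub_zero]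
  have hpair : (∑ i : Fin N, ∑ j : Fin N, t' i j) - ∑ i : Fin N, ∑ j : Fin N, t i j
      = 2 * (∑ d ∈ Icc 1 k, J d) - 2 * ∑ d ∈ Icc 1 (N - 1 - k), J d := by
    have e : (∑ i : Fin N, ∑ j : Fin N, t' i j) - ∑ i : Fin N, ∑ j : Fin N, t i j
        = ∑ i : Fin N, ∑ j : Fin N, D i j := by
      rw [← Finset.sum_sub_distrib]
      exact Finset.sum_congr rfl fun i _ => by rw [← Finset.sum_sub_distrib]
    rw [e, hDsum]
    have h1 : ∑ j : Fin N, D K j = -2 * ∑ d ∈ Icc 1 (N - 1 - k), J d := by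
      rw [← sumB N J hk, Finset.mul_sum]
      refine Finset.sum_congr rfl fun j _ => ?_
      rw [hDKj j]
      by_cases hj : k < (j:ℕ)
      · rw [if_pos hj, if_pos hj]
      · rw [if_neg hj, if_neg hj, mul_zero]
    have h2 : ∑ i : Fin N, D i K = 2 * ∑ d ∈ Icc 1 k, J d := by
      rw [← sumA N J (le_of_lt hk), Finset.mul_sum]
      refine Finset.sum_congr rfl fun i _ => ?_
      rw [hDiK i]
      by_cases hi : (i:ℕ) < k
      · rw [if_pos hi, if_pos hi]
      · rw [if_neg hi, if_neg hi, mul_zero]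
    rw [h1, h2]; ring
  have hspin : (∑ i : Fin N, σ' i) - ∑ i : Fin N, σ i = 2 := by
    rw [← Finset.sum_sub_distrib]
    rw [Fintype.sum_eq_single K (fun i hi => by rw [hsame i hi, sub_self])]
    rw [hσ'K, hσK]; norm_num
  have hH' : H N J h σ' = -(∑ i : Fin N, ∑ j : Fin N, t' i j) - h * ∑ i : Fin N, σ' i := rfl
  have hH : H N J h σ = -(∑ i : Fin N, ∑ j : Fin N, t i j) - h * ∑ i : Fin N, σ i := rfl
  have hmul : h * ∑ i : Fin N, σ' i = h * ∑ i : Fin N, σ i + 2 * h := by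
    have e : (∑ i : Fin N, σ' i) = (∑ i : Fin N, σ i) + 2 := by linarith [hspin]
    rw [e]; ring
  rw [hH, hH']
  linarith [hpair, hmul]


/-- Under `0 < h < ∑_{n=1}^{N-1} J(n)`: `f(0) < f(1)`,
`f(⌊N/2⌋) > f(⌊N/2⌋+1) > … > f(N)`, and `f` attains its maximum at some
`k₀` with `1 ≤ k₀ ≤ ⌊N/2⌋`, where `f(k) = H(L^(k))`. -/
theorem shape_of_f (N : ℕ) (hN : 2 ≤ N) (J : ℕ → ℝ)
    (hpos : ∀ n, 1 ≤ n → 0 < J n) (hdec : ∀ n, 1 ≤ n → J (n + 1) < J n)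
    (h : ℝ) (hh0 : 0 < h) (hh1 : h < ∑ n ∈ Finset.Icc 1 (N - 1), J n) :
    (H N J h (Lconf N 0) < H N J h (Lconf N 1)) ∧
    (∀ i, N / 2 ≤ i → i < N → H N J h (Lconf N (i + 1)) < H N J h (Lconf N i)) ∧
    (∃ k₀, 1 ≤ k₀ ∧ k₀ ≤ N / 2 ∧
      ∀ i, i ≤ N → H N J h (Lconf N i) ≤ H N J h (Lconf N k₀)) := by
  have part1 : H N J h (Lconf N 0) < H N J h (Lconf N 1) := by
    have e := step N J h (k := 0) (by omega)
    simp only [Nat.sub_zero] at e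
    rw [e]
    have : (∑ d ∈ Icc 1 0, J d) = 0 := by simp
    rw [this]
    linarith
  have part2 : ∀ i, N / 2 ≤ i → i < N →
      H N J h (Lconf N (i + 1)) < H N J h (Lconf N i) := by
    intro i hi hiN
    have e := step N J h (k := i) hiN
    rw [e]
    have hsub : (∑ d ∈ Icc 1 (N - 1 - i), J d) ≤ ∑ d ∈ Icc 1 i, J d := by
      apply Finset.sum_le_sum_of_subset_of_nonneg
      · exact Finset.Icc_subset_Icc_right (by omega)
      · intro d hd _
        exact (hpos d (Finset.mem_Icc.mp hd).1).le
    linarith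
  refine ⟨part1, part2, ?_⟩
  have h1N2 : 1 ≤ N / 2 := by omega
  have hSne : (Icc 1 (N / 2)).Nonempty := ⟨1, by simp [h1N2]⟩
  obtain ⟨k₀, hk₀S, hmax⟩ :=
    Finset.exists_max_image (Icc 1 (N / 2)) (fun k => H N J h (Lconf N k)) hSne
  obtain ⟨hk₀1, hk₀2⟩ := Finset.mem_Icc.mp hk₀S
  refine ⟨k₀, hk₀1, hk₀2, ?_⟩
  have hdecr : ∀ i, N / 2 ≤ i → i ≤ N →
      H N J h (Lconf N i) ≤ H N J h (Lconf N (N / 2)) := by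
    intro i hi
    induction i, hi using Nat.le_induction with
    | base => intro _; exact le_refl _
    | succ n hn ih =>
      intro hn1
      have := part2 n hn (by omega)
      have := ih (by omega)
      linarith
  intro i hiN
  rcases Nat.lt_or_ge i 1 with h0 | h1
  · interval_cases i
    have h1mem : 1 ∈ Icc 1 (N / 2) := Finset.mem_Icc.mpr ⟨le_refl 1, h1N2⟩
    have := hmax 1 h1mem
    calc H N J h (Lconf N 0) ≤ H N J h (Lconf N 1) := part1.le
      _ ≤ _ := this
  · rcases le_or_gt i (N / 2) with h2 | h2
    · exact hmax i (Finset.mem_Icc.mpr ⟨h1, h2⟩)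
    · have := hdecr i (le_of_lt h2) hiN
      have := hmax (N / 2) (Finset.mem_Icc.mpr ⟨h1N2, le_refl _⟩)
      linarith
end

section
/- Assume J positive and strictly decreasing and 0 < h < ∑_{n=1}^{N-1} J(n). If a configuration σ satisfies H(θ_k σ) ≥ H(σ) for every k ∈ {1,...,N} (i.e., σ is a local minimum of H under single spin flips), then σ is constant: σ = -1 everywhere or σ = +1 everywhere. -/
open Finset

/-!
Suppose `σ` is a non-constant local minimum, so that `σ (a + 1) = -σ a` for some `a`. With `F` the
local field, stability under flipping `a` and `a + 1` reads `0 ≤ σ a (F a + h)` and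
`0 ≤ -σ a (F (a + 1) + h)`; adding them cancels `h` and gives `0 ≤ σ a (F a - F (a + 1))`. But the
sites `a` and `a + 1` contribute `-2 J 1` to this quantity, and since `J` is decreasing the
contributions of the other sites are bounded by two telescoping sums, `J 1 - J (a + 1)` from the
left and `J 1 - J (N - 1 - a)` from the right, so `σ a (F a - F (a + 1)) ≤ -J (a + 1) - J (N - 1 - a) < 0`.
-/

theorem update_apply_eq_add_ite {ι R : Type*} [DecidableEq ι] [AddCommGroup R] (σ : ι → R) (k : ι)
    (x : R) (i : ι) : Function.update σ k x i = σ i + if i = k then x - σ k else 0 := by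
  by_cases hi : i = k <;> simp [hi, add_sub_cancel]

theorem sum_update_eq_add_sub {ι R : Type*} [Fintype ι] [DecidableEq ι] [AddCommGroup R]
    (σ : ι → R) (k : ι) (x : R) :
    ∑ i, Function.update σ k x i = ∑ i, σ i + (x - σ k) := by
  simp [update_apply_eq_add_ite, sum_add_distrib]

theorem sum_sum_mul_update {ι R : Type*} [Fintype ι] [DecidableEq ι] [CommRing R]
    (c : ι → ι → R) (σ : ι → R) (k : ι) (x : R) :
    ∑ i, ∑ j, c i j * Function.update σ k x i * Function.update σ k x j
      = ∑ i, ∑ j, c i j * σ i * σ j + (x - σ k) * ∑ j, (c k j + c j k) * σ j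
        + (x - σ k) ^ 2 * c k k := by
  simp only [update_apply_eq_add_ite, mul_add, add_mul, sum_add_distrib, mul_ite, ite_mul,
    mul_zero, zero_mul, sum_ite_irrel, sum_const_zero, sum_ite_eq', mem_univ, if_true, mul_sum]
  simp only [mul_comm, mul_left_comm, mul_assoc]
  ring

def Fin.toSeq {N : ℕ} (σ : Fin N → ℝ) : ℕ → ℝ := fun j => if hj : j < N then σ ⟨j, hj⟩ else 0

theorem Fin.toSeq_val {N : ℕ} (σ : Fin N → ℝ) (j : Fin N) : Fin.toSeq σ j = σ j := by
  simp [Fin.toSeq]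

noncomputable def localField (N : ℕ) (J τ : ℕ → ℝ) (k : ℕ) : ℝ :=
  ∑ j ∈ range N, if j = k then 0 else J (Nat.dist k j) * τ j

theorem H_update_neg_sub (N : ℕ) (J : ℕ → ℝ) (h : ℝ) (σ : Fin N → ℝ) (k : Fin N) :
    H N J h (Function.update σ k (-σ k)) - H N J h σ
      = 2 * σ k * (localField N J (Fin.toSeq σ) k + h) := by
  set c : Fin N → Fin N → ℝ := fun i j => if (i : ℕ) < j then J (Nat.dist i j) else 0
  have hH : ∀ σ, H N J h σ = -(∑ i, ∑ j, c i j * σ i * σ j) - h * ∑ i, σ i := by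
    simp [H, c, ite_mul]
  have hfield : ∑ j, (c k j + c j k) * σ j = localField N J (Fin.toSeq σ) k := by
    rw [localField, ← Fin.sum_univ_eq_sum_range]
    refine sum_congr rfl fun j _ => ?_
    rcases lt_trichotomy j k with hjk | rfl | hjk
    · simp [c, hjk, Fin.val_ne_of_ne hjk.ne, hjk.not_gt, Nat.dist_comm, Fin.toSeq_val]
    · simp [c]
    · simp [c, hjk, Fin.val_ne_of_ne hjk.ne', hjk.not_gt, Fin.toSeq_val]
  rw [hH, hH, sum_sum_mul_update, sum_update_eq_add_sub, hfield]
  simp only [c, lt_irrefl, if_false]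
  ring

theorem mul_le_abs_of_abs_eq_one (d : ℝ) {s : ℝ} (hs : |s| = 1) : d * s ≤ |d| := by
  simpa [abs_mul, hs] using le_abs_self (d * s)

section Telescoping

variable {J : ℕ → ℝ} {a : ℕ}

theorem sum_range_tsub_telescope :
    ∑ j ∈ range a, (J (a - j) - J (a + 1 - j)) = J 1 - J (a + 1) := by
  rw [← sum_range_reflect, ← sum_range_sub' (fun i => J (i + 1))]
  refine sum_congr rfl fun j hj => ?_
  have hj := mem_range.mp hj
  rw [show a - (a - 1 - j) = j + 1 by omega, show a + 1 - (a - 1 - j) = j + 1 + 1 by omega]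

theorem sum_Ico_tsub_telescope {N : ℕ} (ha : a + 2 ≤ N) :
    ∑ j ∈ Ico (a + 2) N, (J (j - (a + 1)) - J (j - a)) = J 1 - J (N - 1 - a) := by
  rw [sum_Ico_eq_sum_range, show N - 1 - a = N - (a + 2) + 1 by omega,
    ← sum_range_sub' (fun i => J (i + 1))]
  refine sum_congr rfl fun j _ => ?_
  rw [show a + 2 + j - (a + 1) = j + 1 by omega, show a + 2 + j - a = j + 1 + 1 by omega]

theorem sum_range_dist_sub_mul_le (hJ : ∀ n, 1 ≤ n → J (n + 1) ≤ J n) {s : ℕ → ℝ}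
    (hs : ∀ j < a, |s j| = 1) :
    ∑ j ∈ range a, (J (Nat.dist a j) - J (Nat.dist (a + 1) j)) * s j ≤ J 1 - J (a + 1) := by
  rw [← sum_range_tsub_telescope]
  refine sum_le_sum fun j hj => ?_
  have hj := mem_range.mp hj
  have hgap : 0 ≤ J (a - j) - J (a + 1 - j) := by
    rw [show a + 1 - j = a - j + 1 by omega]
    linarith [hJ (a - j) (by omega)]
  rw [Nat.dist_eq_sub_of_le_right (by omega), Nat.dist_eq_sub_of_le_right (by omega)]
  exact (mul_le_abs_of_abs_eq_one _ (hs j hj)).trans_eq (abs_of_nonneg hgap)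

theorem sum_Ico_dist_sub_mul_le (hJ : ∀ n, 1 ≤ n → J (n + 1) ≤ J n) {N : ℕ} (ha : a + 2 ≤ N)
    {s : ℕ → ℝ} (hs : ∀ j < N, |s j| = 1) :
    ∑ j ∈ Ico (a + 2) N, (J (Nat.dist a j) - J (Nat.dist (a + 1) j)) * s j
      ≤ J 1 - J (N - 1 - a) := by
  rw [← sum_Ico_tsub_telescope ha]
  refine sum_le_sum fun j hj => ?_
  have hj := mem_Ico.mp hj
  have hgap : 0 ≤ J (j - (a + 1)) - J (j - a) := by
    rw [show j - a = j - (a + 1) + 1 by omega]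
    linarith [hJ (j - (a + 1)) (by omega)]
  rw [Nat.dist_eq_sub_of_le (by omega), Nat.dist_eq_sub_of_le (by omega)]
  exact (mul_le_abs_of_abs_eq_one _ (hs j hj.2)).trans_eq (by rw [abs_sub_comm, abs_of_nonneg hgap])

end Telescoping

theorem mul_localField_sub_succ_le {N : ℕ} {J τ : ℕ → ℝ} {a : ℕ}
    (hJ : ∀ n, 1 ≤ n → J (n + 1) ≤ J n) (hτ : ∀ j < N, |τ j| = 1) (ha : a + 1 < N)
    (hwall : τ (a + 1) = -τ a) :
    τ a * (localField N J τ a - localField N J τ (a + 1)) ≤ -J (a + 1) - J (N - 1 - a) := by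
  have hspin : ∀ j < N, |τ a * τ j| = 1 := fun j hj => by
    rw [abs_mul, hτ a (by omega), hτ j hj, one_mul]
  have hterm : ∀ j, j ≠ a → j ≠ a + 1 →
      τ a * ((if j = a then 0 else J (Nat.dist a j) * τ j)
        - if j = a + 1 then 0 else J (Nat.dist (a + 1) j) * τ j)
      = (J (Nat.dist a j) - J (Nat.dist (a + 1) j)) * (τ a * τ j) := fun j hja hja' => by
    rw [if_neg hja, if_neg hja']
    ring
  have hleft := sum_range_dist_sub_mul_le (a := a) hJ fun j hj => hspin j (by omega : j < N)
  have hright := sum_Ico_dist_sub_mul_le hJ ha hspin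
  have hsq : τ a * τ a = 1 := by simpa using hspin a (by omega)
  have hdist : Nat.dist a (a + 1) = 1 := by simp [Nat.dist]
  rw [localField, localField, ← sum_sub_distrib, mul_sum, ← sum_range_add_sum_Ico _ ha,
    sum_range_succ, sum_range_succ,
    sum_congr rfl fun j hj => hterm j (by simp at hj; omega) (by simp at hj; omega),
    sum_congr rfl fun j hj => hterm j (by simp at hj; omega) (by simp at hj; omega)]
  simp only [if_true, if_neg (show a ≠ a + 1 by omega), if_neg (show a + 1 ≠ a by omega), hdist,
    Nat.dist_comm (a + 1) a, hwall]
  linear_combination hleft + hright + (-2 * J 1) * hsq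

theorem apply_eq_apply_zero_of_succ_eq {α : Type*} {N : ℕ} {τ : ℕ → α}
    (h : ∀ a, a + 1 < N → τ (a + 1) = τ a) : ∀ j < N, τ j = τ 0
  | 0, _ => rfl
  | j + 1, hj => (h j hj).trans (apply_eq_apply_zero_of_succ_eq h j (by omega))

theorem exists_succ_eq_neg {N : ℕ} {τ : ℕ → ℝ} (hτ : ∀ j < N, |τ j| = 1) {i j : ℕ} (hi : i < N)
    (hj : j < N) (hne : τ i ≠ τ j) : ∃ a, a + 1 < N ∧ τ (a + 1) = -τ a := by
  by_contra! hnowall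
  have hconst := apply_eq_apply_zero_of_succ_eq fun a ha =>
    (abs_eq_abs.mp ((hτ _ ha).trans (hτ a (by omega)).symm)).resolve_right (hnowall a ha)
  exact hne ((hconst i hi).trans (hconst j hj).symm)

theorem local_minima_are_constant_general (N : ℕ) (J : ℕ → ℝ)
    (hpos : ∀ n, 1 ≤ n → 0 < J n) (hdec : ∀ n, 1 ≤ n → J (n + 1) < J n)
    (h : ℝ) (σ : Fin N → ℝ) (hσ : IsConfig σ)
    (hmin : ∀ k : Fin N, H N J h σ ≤ H N J h (Function.update σ k (-(σ k)))) :
    (∀ i, σ i = -1) ∨ (∀ i, σ i = 1) := by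
  set τ := Fin.toSeq σ
  have hτ : ∀ j < N, |τ j| = 1 := fun j hj => by
    rcases hσ ⟨j, hj⟩ with hs | hs <;> simp [τ, Fin.toSeq, hj, hs]
  have hstable : ∀ k < N, 0 ≤ τ k * (localField N J τ k + h) := fun k hk => by
    have hflip := H_update_neg_sub N J h σ ⟨k, hk⟩
    rw [show τ k = σ ⟨k, hk⟩ from Fin.toSeq_val σ ⟨k, hk⟩]
    linarith [hmin ⟨k, hk⟩]
  by_contra! hnc
  obtain ⟨⟨i, hi⟩, ⟨i', hi'⟩⟩ := hnc
  obtain ⟨a, ha, hwall⟩ := exists_succ_eq_neg hτ i.2 i'.2 (by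
    simp only [τ, Fin.toSeq_val, (hσ i).resolve_right hi]
    exact hi'.symm)
  have hbound := mul_localField_sub_succ_le (fun n hn => (hdec n hn).le) hτ ha hwall
  have hstable_succ := hstable (a + 1) ha
  rw [hwall] at hstable_succ
  linarith [hstable a (by omega), hpos (a + 1) (by omega), hpos (N - 1 - a) (by omega)]

/-- Proposition 4.3: if flipping any single spin does not decrease the energy, then
`σ` is the all-minus or the all-plus configuration. -/
theorem local_minima_are_constant (N : ℕ) (hN : 2 ≤ N) (J : ℕ → ℝ)
    (hpos : ∀ n, 1 ≤ n → 0 < J n) (hdec : ∀ n, 1 ≤ n → J (n + 1) < J n)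
    (h : ℝ) (hh0 : 0 < h) (hh1 : h < ∑ n ∈ Finset.Icc 1 (N - 1), J n)
    (σ : Fin N → ℝ) (hσ : IsConfig σ)
    (hmin : ∀ k : Fin N, H N J h σ ≤ H N J h (Function.update σ k (-(σ k)))) :
    (∀ i, σ i = -1) ∨ (∀ i, σ i = 1) :=
  local_minima_are_constant_general N J hpos hdec h σ hσ hmin
end

section
/- Assume J positive and strictly decreasing and 0 < h < ∑_{n=1}^{N-1} J(n). For every configuration σ different from the all-minus and all-plus configurations, there exists a path γ = (σ^(1),...,σ^(n)) of configurations with σ^(1) = σ, consecutive configurations differing at exactly one site, σ^(n) ∈ {all -1, all +1}, and H(σ^(i+1)) < H(σ^(i)) for all i. -/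
open Finset

/-- Two configurations related by a single spin flip. -/
def IsFlip {N : ℕ} (a b : Fin N → ℝ) : Prop := ∃ i, b = Function.update a i (-(a i))

/-- A path of configurations joining σ to η, changing one spin at a time. -/
def IsPathFrom {N : ℕ} (γ : List (Fin N → ℝ)) (σ η : Fin N → ℝ) : Prop :=
  γ ≠ [] ∧ γ.head? = some σ ∧ γ.getLast? = some η ∧ (∀ τ ∈ γ, IsConfig τ) ∧
    List.Chain' IsFlip γ

/-- Communication height: minimal over paths from σ to η of the maximal energy along the path. -/
noncomputable def Phi (N : ℕ) (J : ℕ → ℝ) (h : ℝ) (σ η : Fin N → ℝ) : ℝ :=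
  sInf {x | ∃ γ : List (Fin N → ℝ), IsPathFrom γ σ η ∧
    x = (γ.map (H N J h)).foldr max (H N J h σ)}

noncomputable def Aloc (N : ℕ) (J : ℕ → ℝ) (σ : Fin N → ℝ) (k : Fin N) : ℝ :=
  ∑ j ∈ univ.erase k, J (Nat.dist (k : ℕ) (j : ℕ)) * σ j

lemma S_decomp (N : ℕ) (J : ℕ → ℝ) (σ : Fin N → ℝ) (k : Fin N) :
    ∑ i : Fin N, ∑ j : Fin N, (if (i : ℕ) < (j : ℕ) then J (Nat.dist (i:ℕ) (j:ℕ)) * σ i * σ j else 0)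
    = σ k * Aloc N J σ k
      + ∑ i ∈ univ.erase k, ∑ j ∈ univ.erase k,
          (if (i : ℕ) < (j : ℕ) then J (Nat.dist (i:ℕ) (j:ℕ)) * σ i * σ j else 0) := by
  classical
  set g : Fin N → Fin N → ℝ := fun i j =>
    if (i : ℕ) < (j : ℕ) then J (Nat.dist (i:ℕ) (j:ℕ)) * σ i * σ j else 0 with hg
  have hmem : k ∈ (univ : Finset (Fin N)) := mem_univ k
  have h1 : ∑ i : Fin N, ∑ j : Fin N, g i j
      = (∑ j : Fin N, g k j) + ∑ i ∈ univ.erase k, ∑ j : Fin N, g i j :=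
    (Finset.add_sum_erase _ _ hmem).symm
  have h2 : ∑ j : Fin N, g k j = ∑ j ∈ univ.erase k, g k j := by
    rw [← Finset.add_sum_erase _ _ hmem]
    simp [hg]
  have h3 : ∀ i ∈ univ.erase k, ∑ j : Fin N, g i j
      = g i k + ∑ j ∈ univ.erase k, g i j := fun i _ =>
    (Finset.add_sum_erase _ _ hmem).symm
  rw [h1, h2, Finset.sum_congr rfl h3, Finset.sum_add_distrib]
  have h4 : ∑ j ∈ univ.erase k, g k j + ∑ i ∈ univ.erase k, g i k
      = σ k * Aloc N J σ k := by
    rw [← Finset.sum_add_distrib, Aloc, Finset.mul_sum]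
    refine Finset.sum_congr rfl fun j hj => ?_
    have hjk : (j : ℕ) ≠ (k : ℕ) := fun hc => (Finset.mem_erase.1 hj).1 (Fin.val_injective hc)
    simp only [hg]
    rcases lt_or_gt_of_ne hjk with hlt | hgt
    · rw [if_neg (by omega), if_pos hlt, Nat.dist_comm]
      ring
    · rw [if_pos hgt, if_neg (by omega)]
      ring
  linarith [h4]

lemma H_update (N : ℕ) (J : ℕ → ℝ) (h : ℝ) (σ : Fin N → ℝ) (k : Fin N) (b : ℝ) :
    H N J h (Function.update σ k b)
      = H N J h σ + (σ k - b) * (Aloc N J σ k + h) := by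
  classical
  have hAk : Aloc N J (Function.update σ k b) k = Aloc N J σ k := by
    refine Finset.sum_congr rfl fun j hj => ?_
    rw [Function.update_of_ne (Finset.mem_erase.1 hj).1]
  have hR : ∑ i ∈ univ.erase k, ∑ j ∈ univ.erase k,
        (if (i : ℕ) < (j : ℕ) then J (Nat.dist (i:ℕ) (j:ℕ)) *
          (Function.update σ k b) i * (Function.update σ k b) j else 0)
      = ∑ i ∈ univ.erase k, ∑ j ∈ univ.erase k,
        (if (i : ℕ) < (j : ℕ) then J (Nat.dist (i:ℕ) (j:ℕ)) * σ i * σ j else 0) := by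
    refine Finset.sum_congr rfl fun i hi => Finset.sum_congr rfl fun j hj => ?_
    rw [Function.update_of_ne (Finset.mem_erase.1 hi).1,
      Function.update_of_ne (Finset.mem_erase.1 hj).1]
  have hsum : ∑ i : Fin N, (Function.update σ k b) i = ∑ i : Fin N, σ i - σ k + b := by
    rw [Finset.sum_update_of_mem (mem_univ k), ← Finset.add_sum_erase _ σ (mem_univ k), Finset.erase_eq]
    ring
  rw [H, H, S_decomp N J (Function.update σ k b) k, S_decomp N J σ k, hAk, hR, hsum,
    Function.update_self]
  ring


lemma telescope (J : ℕ → ℝ) (n : ℕ) :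
    ∑ i ∈ range n, (J (i + 1) - J (i + 2)) = J 1 - J (n + 1) := by
  simpa using Finset.sum_range_sub' (fun i => J (i + 1)) n

lemma Dbound (N : ℕ) (J : ℕ → ℝ) (hpos : ∀ n, 1 ≤ n → 0 < J n)
    (hdec : ∀ n, 1 ≤ n → J (n + 1) < J n) (a : ℕ) (ha : a + 1 < N) :
    ∑ j ∈ ((range N).erase a).erase (a + 1),
      |J (Nat.dist a j) - J (Nat.dist (a + 1) j)| < 2 * J 1 := by
  have hS : ((range N).erase a).erase (a + 1) = range a ∪ Ico (a + 2) N := by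
    ext j
    simp only [Finset.mem_erase, Finset.mem_range, Finset.mem_union, Finset.mem_Ico]
    omega
  have hdisj : Disjoint (range a) (Ico (a + 2) N) := by
    rw [Finset.disjoint_left]
    intro j hj hj'
    simp only [Finset.mem_range] at hj
    simp only [Finset.mem_Ico] at hj'
    omega
  rw [hS, Finset.sum_union hdisj]
  have hleft : ∑ j ∈ range a, |J (Nat.dist a j) - J (Nat.dist (a + 1) j)|
      = J 1 - J (a + 1) := by
    have e : ∀ j ∈ range a, |J (Nat.dist a j) - J (Nat.dist (a + 1) j)|
        = (fun i => J (i + 1) - J (i + 2)) (a - 1 - j) := by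
      intro j hj
      simp only [Finset.mem_range] at hj
      have e1 : Nat.dist a j = (a - 1 - j) + 1 := by simp [Nat.dist]; omega
      have e2 : Nat.dist (a + 1) j = (a - 1 - j) + 2 := by simp [Nat.dist]; omega
      rw [e1, e2]
      exact abs_of_pos (by linarith [hdec ((a - 1 - j) + 1) (by omega)])
    rw [Finset.sum_congr rfl e]
    exact (Finset.sum_range_reflect (fun i => J (i + 1) - J (i + 2)) a).trans (telescope J a)
  have hright : ∑ j ∈ Ico (a + 2) N, |J (Nat.dist a j) - J (Nat.dist (a + 1) j)|
      = J 1 - J (N - a - 1) := by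
    rw [Finset.sum_Ico_eq_sum_range]
    have e : ∀ i ∈ range (N - (a + 2)), |J (Nat.dist a (a + 2 + i)) - J (Nat.dist (a + 1) (a + 2 + i))|
        = J (i + 1) - J (i + 2) := by
      intro i _
      have e1 : Nat.dist a (a + 2 + i) = i + 2 := by simp [Nat.dist]; omega
      have e2 : Nat.dist (a + 1) (a + 2 + i) = i + 1 := by simp [Nat.dist]; omega
      rw [e1, e2, abs_sub_comm]
      exact abs_of_pos (by linarith [hdec (i + 1) (by omega)])
    rw [Finset.sum_congr rfl e, telescope]
    congr 1
    congr 1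
    omega
  rw [hleft, hright]
  have h1 := hpos (a + 1) (by omega)
  have h2 := hpos (N - a - 1) (by omega)
  linarith

lemma Aloc_diff (N : ℕ) (J : ℕ → ℝ) (σ : Fin N → ℝ) (p q : Fin N) (hpq : p ≠ q) :
    Aloc N J σ p - Aloc N J σ q
      = J (Nat.dist (p : ℕ) (q : ℕ)) * σ q - J (Nat.dist (q : ℕ) (p : ℕ)) * σ p
        + ∑ j ∈ (univ.erase p).erase q,
            (J (Nat.dist (p : ℕ) (j : ℕ)) - J (Nat.dist (q : ℕ) (j : ℕ))) * σ j := by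
  classical
  have hqmem : q ∈ univ.erase p := Finset.mem_erase.2 ⟨hpq.symm, mem_univ q⟩
  have hpmem : p ∈ univ.erase q := Finset.mem_erase.2 ⟨hpq, mem_univ p⟩
  have h1 : Aloc N J σ p
      = J (Nat.dist (p : ℕ) (q : ℕ)) * σ q
        + ∑ j ∈ (univ.erase p).erase q, J (Nat.dist (p : ℕ) (j : ℕ)) * σ j :=
    (Finset.add_sum_erase _ _ hqmem).symm
  have h2 : Aloc N J σ q
      = J (Nat.dist (q : ℕ) (p : ℕ)) * σ p
        + ∑ j ∈ (univ.erase q).erase p, J (Nat.dist (q : ℕ) (j : ℕ)) * σ j :=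
    (Finset.add_sum_erase _ _ hpmem).symm
  rw [h1, h2, Finset.erase_right_comm (a := q) (b := p)]
  have hs : ∑ j ∈ (univ.erase p).erase q,
        (J (Nat.dist (p : ℕ) (j : ℕ)) - J (Nat.dist (q : ℕ) (j : ℕ))) * σ j
      = ∑ j ∈ (univ.erase p).erase q, J (Nat.dist (p : ℕ) (j : ℕ)) * σ j
        - ∑ j ∈ (univ.erase p).erase q, J (Nat.dist (q : ℕ) (j : ℕ)) * σ j := by
    rw [← Finset.sum_sub_distrib]
    exact Finset.sum_congr rfl fun j _ => by ring
  rw [hs]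
  ring

lemma sum_erase2_fin_nat (N : ℕ) (F : ℕ → ℝ) (p q : Fin N) (hpq : p ≠ q) :
    ∑ j ∈ (univ.erase p).erase q, F (j : ℕ)
      = ∑ j ∈ ((range N).erase (p : ℕ)).erase (q : ℕ), F j := by
  classical
  have hvne : (q : ℕ) ≠ (p : ℕ) := fun hc => hpq (Fin.val_injective hc).symm
  have hqmem : q ∈ univ.erase p := Finset.mem_erase.2 ⟨hpq.symm, mem_univ q⟩
  have hqmem' : (q : ℕ) ∈ (range N).erase (p : ℕ) :=
    Finset.mem_erase.2 ⟨hvne, Finset.mem_range.2 q.isLt⟩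
  have e1 : F (q : ℕ) + ∑ j ∈ (univ.erase p).erase q, F (j : ℕ)
      = ∑ j ∈ univ.erase p, F (j : ℕ) :=
    Finset.add_sum_erase _ (fun j : Fin N => F (j : ℕ)) hqmem
  have e2 : F (p : ℕ) + ∑ j ∈ univ.erase p, F (j : ℕ) = ∑ j : Fin N, F (j : ℕ) :=
    Finset.add_sum_erase _ (fun j : Fin N => F (j : ℕ)) (mem_univ p)
  have e3 : F (q : ℕ) + ∑ j ∈ ((range N).erase (p : ℕ)).erase (q : ℕ), F j
      = ∑ j ∈ (range N).erase (p : ℕ), F j := Finset.add_sum_erase _ _ hqmem'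
  have e4 : F (p : ℕ) + ∑ j ∈ (range N).erase (p : ℕ), F j = ∑ j ∈ range N, F j :=
    Finset.add_sum_erase _ _ (Finset.mem_range.2 p.isLt)
  have e5 : ∑ j : Fin N, F (j : ℕ) = ∑ j ∈ range N, F j :=
    Fin.sum_univ_eq_sum_range F N
  linarith

lemma core_flip (N : ℕ) (J : ℕ → ℝ) (hpos : ∀ n, 1 ≤ n → 0 < J n)
    (hdec : ∀ n, 1 ≤ n → J (n + 1) < J n) (h : ℝ) (σ : Fin N → ℝ) (hσ : IsConfig σ)
    (p q : Fin N) (hp : σ p = 1) (hq : σ q = -1) (hadj : Nat.dist (p : ℕ) (q : ℕ) = 1) :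
    ∃ k : Fin N, σ k * (Aloc N J σ k + h) < 0 := by
  classical
  by_contra hcon
  push_neg at hcon
  have h1 : 0 ≤ Aloc N J σ p + h := by
    have := hcon p; rw [hp, one_mul] at this; exact this
  have h2 : Aloc N J σ q + h ≤ 0 := by
    have := hcon q; rw [hq] at this; linarith
  have hpq : p ≠ q := fun e => by rw [e, hq] at hp; norm_num at hp
  have hd : 0 ≤ Aloc N J σ p - Aloc N J σ q := by linarith
  rw [Aloc_diff N J σ p q hpq] at hd
  have hd1 : Nat.dist (q : ℕ) (p : ℕ) = 1 := by rw [Nat.dist_comm]; exact hadj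
  rw [hadj, hd1, hp, hq] at hd
  set a : ℕ := min (p : ℕ) (q : ℕ) with ha
  have horient : ((p : ℕ) = a ∧ (q : ℕ) = a + 1) ∨ ((q : ℕ) = a ∧ (p : ℕ) = a + 1) := by
    simp only [Nat.dist] at hadj
    omega
  have haN : a + 1 < N := by
    have := p.isLt; have := q.isLt
    rcases horient with ⟨e1, e2⟩ | ⟨e1, e2⟩ <;> omega
  have hbound : ∑ j ∈ (univ.erase p).erase q,
        (J (Nat.dist (p : ℕ) (j : ℕ)) - J (Nat.dist (q : ℕ) (j : ℕ))) * σ j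
      ≤ ∑ j ∈ (univ.erase p).erase q,
        |J (Nat.dist a (j : ℕ)) - J (Nat.dist (a + 1) (j : ℕ))| := by
    apply Finset.sum_le_sum
    intro j _
    have habs : |J (Nat.dist (p : ℕ) (j : ℕ)) - J (Nat.dist (q : ℕ) (j : ℕ))|
        = |J (Nat.dist a (j : ℕ)) - J (Nat.dist (a + 1) (j : ℕ))| := by
      rcases horient with ⟨e1, e2⟩ | ⟨e1, e2⟩
      · rw [e1, e2]
      · rw [e1, e2, abs_sub_comm]
    rcases hσ j with hj1 | hj1
    · rw [hj1, mul_one, ← habs]; exact le_abs_self _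
    · rw [hj1, mul_neg_one, ← habs]; exact neg_le_abs _
  have hconv : ∑ j ∈ (univ.erase p).erase q,
        |J (Nat.dist a (j : ℕ)) - J (Nat.dist (a + 1) (j : ℕ))|
      = ∑ j ∈ ((range N).erase a).erase (a + 1),
        |J (Nat.dist a j) - J (Nat.dist (a + 1) j)| := by
    rw [sum_erase2_fin_nat N (fun n => |J (Nat.dist a n) - J (Nat.dist (a + 1) n)|) p q hpq]
    rcases horient with ⟨e1, e2⟩ | ⟨e1, e2⟩
    · rw [e1, e2]
    · rw [e1, e2, Finset.erase_right_comm]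
  have hDb := Dbound N J hpos hdec a haN
  have hJ1 := hpos 1 le_rfl
  rw [hconv] at hbound
  linarith

lemma exists_good_flip (N : ℕ) (J : ℕ → ℝ) (hpos : ∀ n, 1 ≤ n → 0 < J n)
    (hdec : ∀ n, 1 ≤ n → J (n + 1) < J n) (h : ℝ) (σ : Fin N → ℝ) (hσ : IsConfig σ)
    (hne₁ : σ ≠ fun _ => -1) (hne₂ : σ ≠ fun _ => 1) :
    ∃ k : Fin N, σ k * (Aloc N J σ k + h) < 0 := by
  classical
  -- find an adjacent disagreeing pair
  have hN0 : 0 < N := by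
    rcases Nat.eq_zero_or_pos N with h0 | h0
    · subst h0; exact absurd (funext fun i => i.elim0) hne₁
    · exact h0
  have hpair : ∃ i j : Fin N, (j : ℕ) = (i : ℕ) + 1 ∧ σ i ≠ σ j := by
    by_contra hno
    push_neg at hno
    have key : ∀ n (hn : n < N), σ ⟨n, hn⟩ = σ ⟨0, hN0⟩ := by
      intro n
      induction n with
      | zero => intro hn; rfl
      | succ m ih =>
        intro hn
        have hm : m < N := by omega
        have := hno ⟨m, hm⟩ ⟨m + 1, hn⟩ rfl
        rw [← this]
        exact ih hm
    have hconst : σ = fun _ => σ ⟨0, hN0⟩ := by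
      funext i
      conv_lhs => rw [← Fin.eta i i.isLt]
      exact key (i : ℕ) i.isLt
    rcases hσ ⟨0, hN0⟩ with h1 | h1
    · exact hne₂ (by rw [hconst, h1])
    · exact hne₁ (by rw [hconst, h1])
  obtain ⟨i, j, hij, hne⟩ := hpair
  have hadj : Nat.dist (i : ℕ) (j : ℕ) = 1 := by simp [Nat.dist]; omega
  have hadj' : Nat.dist (j : ℕ) (i : ℕ) = 1 := by rw [Nat.dist_comm]; exact hadj
  rcases hσ i with hi | hi <;> rcases hσ j with hj | hj
  · exact absurd (hi.trans hj.symm) hne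
  · exact core_flip N J hpos hdec h σ hσ i j hi hj hadj
  · exact core_flip N J hpos hdec h σ hσ j i hj hi hadj'
  · exact absurd (hi.trans hj.symm) hne

lemma config_finite (N : ℕ) : {τ : Fin N → ℝ | IsConfig τ}.Finite := by
  classical
  apply Set.Finite.subset (Set.finite_range
    (fun b : Fin N → Bool => fun i => if b i then (1 : ℝ) else -1))
  intro τ hτ
  refine ⟨fun i => if τ i = 1 then true else false, ?_⟩
  funext i
  rcases hτ i with h | h <;> simp [h] <;> norm_num

noncomputable def mcard (N : ℕ) (J : ℕ → ℝ) (h : ℝ) (σ : Fin N → ℝ) : ℕ :=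
  Set.ncard {τ : Fin N → ℝ | IsConfig τ ∧ H N J h τ < H N J h σ}

lemma mcard_lt (N : ℕ) (J : ℕ → ℝ) (h : ℝ) (σ σ' : Fin N → ℝ)
    (hconf' : IsConfig σ') (hH : H N J h σ' < H N J h σ) :
    mcard N J h σ' < mcard N J h σ := by
  have hsub : {τ : Fin N → ℝ | IsConfig τ ∧ H N J h τ < H N J h σ'}
      ⊆ {τ : Fin N → ℝ | IsConfig τ ∧ H N J h τ < H N J h σ} :=
    fun τ hτ => ⟨hτ.1, hτ.2.trans hH⟩
  apply Set.ncard_lt_ncard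
  · exact (Set.ssubset_iff_of_subset hsub).2 ⟨σ', ⟨hconf', hH⟩, fun hc => lt_irrefl _ hc.2⟩
  · exact (config_finite N).subset fun τ hτ => hτ.1

lemma config_update {N : ℕ} (σ : Fin N → ℝ) (hσ : IsConfig σ) (k : Fin N) :
    IsConfig (Function.update σ k (-(σ k))) := by
  intro i
  by_cases hik : i = k
  · subst hik
    rw [Function.update_self]
    rcases hσ i with h | h <;> simp [h]
  · rw [Function.update_of_ne hik]
    exact hσ i

lemma path_single {N : ℕ} (σ : Fin N → ℝ) (hσ : IsConfig σ) : IsPathFrom [σ] σ σ := by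
  refine ⟨by simp, rfl, rfl, ?_, List.isChain_singleton σ⟩
  intro τ hτ
  rcases List.mem_singleton.1 hτ with rfl
  exact hσ

lemma path_cons (N : ℕ) (J : ℕ → ℝ) (h : ℝ) (σ σ' η : Fin N → ℝ)
    (γ : List (Fin N → ℝ)) (k : Fin N) (hupd : σ' = Function.update σ k (-(σ k)))
    (hσ : IsConfig σ) (hH : H N J h σ' < H N J h σ) (hp : IsPathFrom γ σ' η)
    (hc : List.Chain' (fun a b => H N J h b < H N J h a) γ) :
    IsPathFrom (σ :: γ) σ η ∧
      List.Chain' (fun a b => H N J h b < H N J h a) (σ :: γ) := by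
  obtain ⟨hne, hhead, hlast, hconf, hchain⟩ := hp
  obtain ⟨b, l, rfl⟩ := List.exists_cons_of_ne_nil hne
  have hb : b = σ' := by simpa using hhead
  subst hb
  constructor
  · refine ⟨by simp, rfl, ?_, ?_, ?_⟩
    · rw [List.getLast?_cons_cons]
      exact hlast
    · intro τ hτ
      rcases List.mem_cons.1 hτ with rfl | hτ
      · exact hσ
      · exact hconf τ hτ
    · exact List.isChain_cons_cons.2 ⟨⟨k, hupd⟩, hchain⟩
  · exact List.isChain_cons_cons.2 ⟨hH, hc⟩

lemma descend (N : ℕ) (J : ℕ → ℝ) (hpos : ∀ n, 1 ≤ n → 0 < J n)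
    (hdec : ∀ n, 1 ≤ n → J (n + 1) < J n) (h : ℝ) :
    ∀ n : ℕ, ∀ σ : Fin N → ℝ, IsConfig σ → mcard N J h σ ≤ n →
      ∃ γ : List (Fin N → ℝ),
        (IsPathFrom γ σ (fun _ => -1) ∨ IsPathFrom γ σ (fun _ => 1)) ∧
        List.Chain' (fun a b => H N J h b < H N J h a) γ := by
  intro n
  induction n using Nat.strong_induction_on with
  | _ n ih =>
    intro σ hσ hm
    by_cases hc1 : σ = fun _ => (-1 : ℝ)
    · exact ⟨[σ], Or.inl (hc1 ▸ path_single σ hσ), List.isChain_singleton σ⟩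
    by_cases hc2 : σ = fun _ => (1 : ℝ)
    · exact ⟨[σ], Or.inr (hc2 ▸ path_single σ hσ), List.isChain_singleton σ⟩
    obtain ⟨k, hk⟩ := exists_good_flip N J hpos hdec h σ hσ hc1 hc2
    set σ' := Function.update σ k (-(σ k)) with hupd
    have hH : H N J h σ' < H N J h σ := by
      have he := H_update N J h σ k (-(σ k))
      have h2 : (σ k - -(σ k)) * (Aloc N J σ k + h)
          = 2 * (σ k * (Aloc N J σ k + h)) := by ring
      rw [h2] at he
      rw [← hupd] at he
      linarith
    have hconf' : IsConfig σ' := config_update σ hσ k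
    have hlt : mcard N J h σ' < n := lt_of_lt_of_le (mcard_lt N J h σ σ' hconf' hH) hm
    obtain ⟨γ', hor, hchain⟩ := ih (mcard N J h σ') hlt σ' hconf' le_rfl
    rcases hor with hp | hp
    · obtain ⟨h1, h2⟩ := path_cons N J h σ σ' _ γ' k hupd hσ hH hp hchain
      exact ⟨σ :: γ', Or.inl h1, h2⟩
    · obtain ⟨h1, h2⟩ := path_cons N J h σ σ' _ γ' k hupd hσ hH hp hchain
      exact ⟨σ :: γ', Or.inr h1, h2⟩

/-- Corollary 4.4: from any non-constant configuration there is a strictly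
energy-decreasing one-spin-flip path ending in the all-minus or all-plus configuration. -/
theorem descending_path_exists (N : ℕ) (hN : 2 ≤ N) (J : ℕ → ℝ)
    (hpos : ∀ n, 1 ≤ n → 0 < J n) (hdec : ∀ n, 1 ≤ n → J (n + 1) < J n)
    (h : ℝ) (hh0 : 0 < h) (hh1 : h < ∑ n ∈ Finset.Icc 1 (N - 1), J n)
    (σ : Fin N → ℝ) (hσ : IsConfig σ)
    (hne₁ : σ ≠ fun _ => -1) (hne₂ : σ ≠ fun _ => 1) :
    ∃ γ : List (Fin N → ℝ),
      (IsPathFrom γ σ (fun _ => -1) ∨ IsPathFrom γ σ (fun _ => 1)) ∧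
      List.Chain' (fun a b => H N J h b < H N J h a) γ := by
  exact descend N J hpos hdec h (mcard N J h σ) σ hσ le_rfl
end

section
/- Assume J positive, strictly decreasing, and 0 < h < ∑_{n=1}^{N-1} J(n). Then the communication height between the all-minus and all-plus configurations satisfies Φ(-1, +1) = max_{0 ≤ k ≤ N} H(L^(k)). -/
open Finset

/-!
Write a configuration as `ofBool N f` for a string `f : ℕ → Bool` of plus sites. Its energy is a
constant, plus twice the interaction `discordEnergy` across pairs of opposite spins, minus a term
that only sees the number `k` of plus spins. For decreasing `J` the initial segment `L^(k)` has the
least `discordEnergy` among strings with `k` plus sites. By induction on `N`: if the last spin is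
minus, the new pairs cost `J (N - i)` summed over the plus sites `i`, which is smallest when they
fill `[0, k)`; otherwise complement the string, which exchanges `k` and `N - k` and, up to a
reflection, `L^(N - k)` and `L^(k)`.

A single flip changes the number of plus spins by one, so every path from `-1` to `+1` passes
through each level `k` and climbs at least to `H(L^(k))`; the path `L^(0), …, L^(N)` attains the
maximum of these values.
-/

theorem Finset.sum_range_card_le_sum_of_monotoneOn {M : Type*} [AddCommMonoid M]
    [PartialOrder M] [IsOrderedAddMonoid M] {g : ℕ → M} {n : ℕ}
    (hg : MonotoneOn g (Set.Iio n)) {s : Finset ℕ} (hs : s ⊆ range n) :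
    ∑ i ∈ range #s, g i ≤ ∑ i ∈ s, g i := by
  induction s using Finset.induction_on_max with
  | empty => simp
  | insert a s hlt ih =>
    have has : a ∉ s := fun ha => (hlt a ha).false
    have hcard : #s ≤ a := by
      simpa using card_le_card (fun x hx => mem_range.2 (hlt x hx) : s ⊆ range a)
    have ha : a < n := mem_range.1 (hs (mem_insert_self a s))
    rw [card_insert_of_notMem has, sum_range_succ, sum_insert has, add_comm (g a)]
    exact add_le_add (ih ((subset_insert a s).trans hs))
      (hg (Set.mem_Iio.2 (hcard.trans_lt ha)) (Set.mem_Iio.2 ha) hcard)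

theorem Fin.sum_univ_sum_univ_eq_sum_range_sum_range {M : Type*} [AddCommMonoid M] (N : ℕ)
    (F : ℕ → ℕ → M) :
    ∑ i : Fin N, ∑ j : Fin N, F i j = ∑ i ∈ range N, ∑ j ∈ range N, F i j := by
  simp_rw [Fin.sum_univ_eq_sum_range (F _),
    Fin.sum_univ_eq_sum_range (fun i => ∑ j ∈ range N, F i j)]

theorem List.foldr_max_le {α : Type*} [LinearOrder α] {l : List α} {a b : α} (hb : b ≤ a)
    (h : ∀ x ∈ l, x ≤ a) : l.foldr max b ≤ a := by
  induction l with
  | nil => exact hb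
  | cons x l ih =>
    exact max_le (h x List.mem_cons_self) (ih fun y hy => h y (List.mem_cons_of_mem x hy))

theorem List.exists_mem_eq_of_isChain_le_add_one {α : Type*} (m : α → ℕ) {l : List α}
    (hl : l.IsChain fun a b => m b ≤ m a + 1) {a b : α} (ha : l.head? = some a)
    (hb : l.getLast? = some b) {k : ℕ} (hak : m a ≤ k) (hkb : k ≤ m b) :
    ∃ x ∈ l, m x = k := by
  induction l generalizing a with
  | nil => simp at ha
  | cons x t ih =>
    obtain rfl : x = a := by simpa using ha
    by_cases hxk : m x = k
    · exact ⟨x, List.mem_cons_self, hxk⟩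
    cases t with
    | nil =>
      obtain rfl : x = b := by simpa using hb
      omega
    | cons y t =>
      rw [List.isChain_cons_cons] at hl
      obtain ⟨z, hz, hzk⟩ := ih hl.2 rfl (by simpa using hb) (by omega)
      exact ⟨z, List.mem_cons_of_mem x hz, hzk⟩

def plusCount (N : ℕ) (f : ℕ → Bool) : ℕ := #{i ∈ range N | f i}

def initSeg (k : ℕ) : ℕ → Bool := fun i => decide (i < k)

noncomputable def discordEnergy (N : ℕ) (J : ℕ → ℝ) (f : ℕ → Bool) : ℝ :=
  ∑ i ∈ range N, ∑ j ∈ range N, if i < j ∧ f i ≠ f j then J (j - i) else 0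

theorem plusCount_le (N : ℕ) (f : ℕ → Bool) : plusCount N f ≤ N :=
  (card_filter_le _ _).trans (card_range N).le

theorem plusCount_not (N : ℕ) (f : ℕ → Bool) :
    plusCount N (fun i => !f i) = N - plusCount N f := by
  have := card_filter_add_card_filter_not (s := range N) (fun i => f i = true)
  simp only [card_range, Bool.not_eq_true] at this
  simp only [plusCount, Bool.not_eq_true']
  omega

theorem plusCount_succ_of_false {N : ℕ} {f : ℕ → Bool} (hf : f N = false) :
    plusCount (N + 1) f = plusCount N f := by
  simp [plusCount, range_add_one, filter_insert, hf]

theorem plusCount_initSeg (N k : ℕ) : plusCount N (initSeg k) = min k N := by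
  simp only [plusCount, initSeg, decide_eq_true_eq]
  rw [show {i ∈ range N | i < k} = range (min k N) by
    ext; simp only [mem_filter, mem_range, lt_inf_iff]; omega, card_range]

section DiscordEnergy

variable {N : ℕ} {J : ℕ → ℝ}

theorem discordEnergy_congr {f g : ℕ → Bool} (h : ∀ i < N, f i = g i) :
    discordEnergy N J f = discordEnergy N J g := by
  refine sum_congr rfl fun i hi => sum_congr rfl fun j hj => ?_
  rw [h i (mem_range.1 hi), h j (mem_range.1 hj)]

theorem discordEnergy_not (f : ℕ → Bool) :
    discordEnergy N J (fun i => !f i) = discordEnergy N J f := by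
  simp only [discordEnergy, ne_eq, Bool.not_inj_iff]

theorem discordEnergy_reflect (f : ℕ → Bool) :
    discordEnergy N J (fun i => f (N - 1 - i)) = discordEnergy N J f := by
  set G : ℕ → ℕ → ℝ := fun a b => if b < a ∧ f a ≠ f b then J (a - b) else 0
  calc discordEnergy N J (fun i => f (N - 1 - i))
      = ∑ i ∈ range N, ∑ j ∈ range N, G (N - 1 - i) (N - 1 - j) := by
        refine sum_congr rfl fun i hi => sum_congr rfl fun j hj => ?_
        simp only [mem_range] at hi hj
        simp only [G, show N - 1 - j < N - 1 - i ↔ i < j by omega,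
          show N - 1 - i - (N - 1 - j) = j - i by omega]
    _ = ∑ i ∈ range N, ∑ j ∈ range N, G i j := by
        rw [sum_congr rfl fun i _ => sum_range_reflect (G (N - 1 - i)) N]
        exact sum_range_reflect (fun a => ∑ j ∈ range N, G a j) N
    _ = discordEnergy N J f := by
        rw [sum_comm]
        simp only [G, discordEnergy, ne_comm]

theorem discordEnergy_initSeg_sub {k : ℕ} (hk : k ≤ N) :
    discordEnergy N J (initSeg (N - k)) = discordEnergy N J (initSeg k) := by
  calc discordEnergy N J (initSeg (N - k))
      = discordEnergy N J (fun i => !initSeg k (N - 1 - i)) :=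
        discordEnergy_congr fun i hi => by
          simp only [initSeg, ← decide_not]
          exact decide_eq_decide.2 (by omega)
    _ = discordEnergy N J (initSeg k) := by rw [discordEnergy_not, discordEnergy_reflect]

theorem discordEnergy_succ (f : ℕ → Bool) :
    discordEnergy (N + 1) J f =
      discordEnergy N J f + ∑ i ∈ range N with f i ≠ f N, J (N - i) := by
  have hlast : ∑ j ∈ range (N + 1), (if N < j ∧ f N ≠ f j then J (j - N) else 0) = 0 :=
    sum_eq_zero fun j hj => if_neg fun h => by have := mem_range.1 hj; omega
  rw [discordEnergy, sum_range_succ, hlast, add_zero, sum_filter, discordEnergy,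
    ← sum_add_distrib]
  refine sum_congr rfl fun i hi => ?_
  rw [sum_range_succ, if_congr (and_iff_right (mem_range.1 hi)) rfl rfl]

theorem discordEnergy_initSeg_le_succ_of_false (hJ : AntitoneOn J (Set.Ici 1))
    {f : ℕ → Bool} (hf : f N = false)
    (ih : discordEnergy N J (initSeg (plusCount N f)) ≤ discordEnergy N J f) :
    discordEnergy (N + 1) J (initSeg (plusCount (N + 1) f)) ≤ discordEnergy (N + 1) J f := by
  rw [plusCount_succ_of_false hf, discordEnergy_succ, discordEnergy_succ]
  have hk : plusCount N f ≤ N := plusCount_le N f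
  have hseg : {i ∈ range N | initSeg (plusCount N f) i ≠ initSeg (plusCount N f) N}
      = range (plusCount N f) := by
    ext i
    simp only [initSeg, ne_eq, decide_eq_decide, mem_filter, mem_range]
    omega
  have hplus : {i ∈ range N | f i ≠ f N} = {i ∈ range N | f i} := by
    simp only [hf, ne_eq, Bool.not_eq_false]
  have hmono : MonotoneOn (fun i => J (N - i)) (Set.Iio N) := fun a ha b hb hab => by
    simp only [Set.mem_Iio] at ha hb
    exact hJ (Set.mem_Ici.2 (by omega)) (Set.mem_Ici.2 (by omega)) (by omega)
  rw [hseg, hplus]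
  exact add_le_add ih (sum_range_card_le_sum_of_monotoneOn hmono (filter_subset _ _))

theorem discordEnergy_initSeg_le (hJ : AntitoneOn J (Set.Ici 1)) (N : ℕ) (f : ℕ → Bool) :
    discordEnergy N J (initSeg (plusCount N f)) ≤ discordEnergy N J f := by
  induction N generalizing f with
  | zero => simp [discordEnergy]
  | succ N ih =>
    cases hfN : f N
    · exact discordEnergy_initSeg_le_succ_of_false hJ hfN (ih f)
    · have key := discordEnergy_initSeg_le_succ_of_false (f := fun i => !f i) hJ
        (by simp [hfN]) (ih _)
      rwa [plusCount_not, discordEnergy_initSeg_sub (plusCount_le _ _), discordEnergy_not] at key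

end DiscordEnergy

def ofBool (N : ℕ) (f : ℕ → Bool) : Fin N → ℝ := fun i => if f i then 1 else -1

theorem H_ofBool (N : ℕ) (J : ℕ → ℝ) (h : ℝ) (f : ℕ → Bool) :
    H N J h (ofBool N f) = 2 * discordEnergy N J f - h * (2 * plusCount N f - N)
      - ∑ i ∈ range N, ∑ j ∈ range N, if i < j then J (j - i) else 0 := by
  have hfield : ∑ i : Fin N, ofBool N f i = 2 * plusCount N f - N := by
    rw [plusCount, natCast_card_filter, mul_sum, ← Fin.sum_univ_eq_sum_range,
      show (N : ℝ) = ∑ _i : Fin N, 1 by simp, ← sum_sub_distrib]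
    refine sum_congr rfl fun i _ => ?_
    simp only [ofBool]
    split_ifs <;> norm_num
  have hpair : ∑ i : Fin N, ∑ j : Fin N,
      (if (i : ℕ) < j then J (Nat.dist i j) * ofBool N f i * ofBool N f j else 0)
      = ∑ i ∈ range N, ∑ j ∈ range N, ((if i < j then J (j - i) else 0)
          - 2 * if i < j ∧ f i ≠ f j then J (j - i) else 0) := by
    rw [← Fin.sum_univ_sum_univ_eq_sum_range_sum_range]
    refine sum_congr rfl fun i _ => sum_congr rfl fun j _ => ?_
    by_cases hij : (i : ℕ) < j
    · cases hi : f i <;> cases hj : f j <;>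
        simp only [ofBool, hij, hi, hj, true_and, ne_eq, not_true_eq_false, not_false_eq_true,
          Bool.false_eq_true, Bool.true_eq_false, ↓reduceIte, Nat.dist_eq_sub_of_le hij.le] <;>
        ring
    · simp [hij]
  rw [H, hfield, hpair, sum_congr rfl fun i _ => sum_sub_distrib .., sum_sub_distrib,
    discordEnergy, mul_sum]
  simp only [mul_sum]
  ring

theorem IsConfig.exists_eq_ofBool {N : ℕ} {σ : Fin N → ℝ} (hσ : IsConfig σ) :
    ∃ f, σ = ofBool N f :=
  ⟨fun n => if h : n < N then decide (σ ⟨n, h⟩ = 1) else false,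
    funext fun i => by rcases hσ i with h | h <;> norm_num [ofBool, h]⟩

theorem Lconf_eq_ofBool (N k : ℕ) : Lconf N k = ofBool N (initSeg k) := by
  funext i
  simp [Lconf, ofBool, initSeg]

noncomputable def numPlus {N : ℕ} (σ : Fin N → ℝ) : ℕ := #{i | σ i = 1}

theorem numPlus_ofBool (N : ℕ) (f : ℕ → Bool) : numPlus (ofBool N f) = plusCount N f := by
  rw [numPlus, plusCount, card_filter, card_filter,
    ← Fin.sum_univ_eq_sum_range (fun i => if f i then 1 else 0)]
  refine sum_congr rfl fun i _ => ?_
  cases hfi : f i <;> norm_num [ofBool, hfi]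

theorem numPlus_update_le {N : ℕ} (σ : Fin N → ℝ) (i : Fin N) (v : ℝ) :
    numPlus (Function.update σ i v) ≤ numPlus σ + 1 := by
  refine (card_le_card fun j hj => ?_).trans (card_insert_le i _)
  simp only [mem_filter, mem_univ, true_and, mem_insert] at hj ⊢
  by_cases hji : j = i
  · exact Or.inl hji
  · exact Or.inr (by rwa [Function.update_of_ne hji] at hj)

theorem numPlus_neg_one (N : ℕ) : numPlus (fun _ : Fin N => (-1 : ℝ)) = 0 := by
  norm_num [numPlus]

theorem numPlus_one (N : ℕ) : numPlus (fun _ : Fin N => (1 : ℝ)) = N := by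
  simp [numPlus]

theorem H_Lconf_numPlus_le {N : ℕ} {J : ℕ → ℝ} (hJ : AntitoneOn J (Set.Ici 1)) (h : ℝ)
    {σ : Fin N → ℝ} (hσ : IsConfig σ) : H N J h (Lconf N (numPlus σ)) ≤ H N J h σ := by
  obtain ⟨f, rfl⟩ := IsConfig.exists_eq_ofBool hσ
  rw [numPlus_ofBool, Lconf_eq_ofBool, H_ofBool, H_ofBool, plusCount_initSeg,
    min_eq_left (plusCount_le N f)]
  linarith [discordEnergy_initSeg_le hJ N f]

theorem Lconf_zero (N : ℕ) : Lconf N 0 = fun _ => -1 := by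
  funext i
  simp [Lconf]

theorem Lconf_self (N : ℕ) : Lconf N N = fun _ => 1 := by
  funext i
  simp [Lconf]

theorem isFlip_Lconf_succ {N m : ℕ} (hm : m < N) : IsFlip (Lconf N m) (Lconf N (m + 1)) := by
  refine ⟨⟨m, hm⟩, funext fun j => ?_⟩
  simp only [Lconf, Function.update_apply, Fin.ext_iff]
  split_ifs <;> first | omega | norm_num

theorem isPathFrom_Lconf (N : ℕ) :
    IsPathFrom ((List.range (N + 1)).map (Lconf N)) (fun _ => -1) (fun _ => 1) := by
  refine ⟨by simp, ?_, ?_, ?_, ?_⟩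
  · simp [List.range_succ_eq_map, Lconf_zero]
  · simp [List.range_succ, Lconf_self]
  · simp only [List.mem_map]
    rintro _ ⟨k, -, rfl⟩ i
    unfold Lconf
    split_ifs <;> simp
  · show List.IsChain _ _
    rw [List.isChain_map, List.isChain_range_succ]
    exact fun m hm => isFlip_Lconf_succ hm

theorem H_Lconf_le_foldr_max {N : ℕ} {J : ℕ → ℝ} (hJ : AntitoneOn J (Set.Ici 1)) (h : ℝ)
    {γ : List (Fin N → ℝ)} (hγ : IsPathFrom γ (fun _ => -1) (fun _ => 1)) {k : ℕ}
    (hk : k ≤ N) :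
    H N J h (Lconf N k) ≤ (γ.map (H N J h)).foldr max (H N J h fun _ => -1) := by
  obtain ⟨-, hhead, hlast, hconf, hchain⟩ := hγ
  obtain ⟨τ, hτ, rfl⟩ := List.exists_mem_eq_of_isChain_le_add_one numPlus (k := k)
    ((hchain : γ.IsChain IsFlip).imp fun a _ ⟨i, hb⟩ => hb ▸ numPlus_update_le a i _)
    hhead hlast
    (by rw [numPlus_neg_one]; exact k.zero_le) (by rwa [numPlus_one])
  exact List.le_max_of_le' _ (List.mem_map_of_mem hτ) (H_Lconf_numPlus_le hJ h (hconf τ hτ))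

theorem foldr_max_H_Lconf_eq_sup' (N : ℕ) (J : ℕ → ℝ) (h : ℝ) :
    (((List.range (N + 1)).map (Lconf N)).map (H N J h)).foldr max (H N J h fun _ => -1) =
      (range (N + 1)).sup' (by simp) (fun k => H N J h (Lconf N k)) := by
  refine le_antisymm (List.foldr_max_le ?_ ?_) (sup'_le _ _ fun k hk => ?_)
  · exact le_sup'_of_le _ (mem_range.2 N.succ_pos) (by rw [Lconf_zero])
  · simp only [List.map_map, List.mem_map, List.mem_range, Function.comp_apply]
    rintro _ ⟨k, hk, rfl⟩
    exact le_sup' (fun k => H N J h (Lconf N k)) (mem_range.2 hk)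
  · exact List.le_max_of_le' _
      (List.mem_map_of_mem (List.mem_map_of_mem (List.mem_range.2 (mem_range.1 hk)))) le_rfl

/-- Theorem 3.1(1) (minimax): the communication height between the all-minus and the
all-plus configuration equals `max_{0 ≤ k ≤ N} H(L^(k))`. -/
theorem communication_height_eq_max (N : ℕ) (J : ℕ → ℝ)
    (hdec : ∀ n, 1 ≤ n → J (n + 1) < J n) (h : ℝ) :
    Phi N J h (fun _ => -1) (fun _ => 1) =
      (Finset.range (N + 1)).sup' (by simp) (fun k => H N J h (Lconf N k)) := by
  have hJ : AntitoneOn J (Set.Ici 1) := antitoneOn_nat_Ici_of_succ_le fun n hn => (hdec n hn).le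
  refine IsLeast.csInf_eq
    ⟨⟨_, isPathFrom_Lconf N, (foldr_max_H_Lconf_eq_sup' N J h).symm⟩, ?_⟩
  rintro _ ⟨γ, hγ, rfl⟩
  exact sup'_le _ _ fun k hk => H_Lconf_le_foldr_max hJ h hγ (Nat.lt_succ_iff.1 (mem_range.1 hk))
end

section
/- Assume J positive, strictly decreasing, and 0 < h < ∑_{n=1}^{N-1} J(n). Then Γ := max_{0 ≤ k ≤ N} H(L^(k)) - H(-1) is strictly positive. -/
open Finset

/-- `Γ = max_{0 ≤ k ≤ N} H(L^(k)) - H(-1) > 0`. -/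
theorem gamma_pos (N : ℕ) (hN : 2 ≤ N) (J : ℕ → ℝ)
    (hpos : ∀ n, 1 ≤ n → 0 < J n) (hdec : ∀ n, 1 ≤ n → J (n + 1) < J n)
    (h : ℝ) (hh0 : 0 < h) (hh1 : h < ∑ n ∈ Finset.Icc 1 (N - 1), J n) :
    0 < (Finset.range (N + 1)).sup' (by simp) (fun k => H N J h (Lconf N k))
        - H N J h (fun _ => -1) := by
  have hN0 : 0 < N := by omega
  rw [sub_pos]
  have h1mem : 1 ∈ Finset.range (N + 1) := Finset.mem_range.mpr (by omega)
  refine lt_of_lt_of_le ?_ (Finset.le_sup' (fun k => H N J h (Lconf N k)) h1mem)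
  -- sums
  set A1 : ℝ := ∑ i : Fin N, ∑ j : Fin N,
      if (i : ℕ) < (j : ℕ) then J (Nat.dist (i : ℕ) (j : ℕ)) * (-1 : ℝ) * (-1 : ℝ) else 0 with hA1
  set A2 : ℝ := ∑ i : Fin N, ∑ j : Fin N,
      if (i : ℕ) < (j : ℕ) then J (Nat.dist (i : ℕ) (j : ℕ)) * Lconf N 1 i * Lconf N 1 j else 0 with hA2
  have hSdiff : (∑ i : Fin N, Lconf N 1 i) - (∑ i : Fin N, (-1 : ℝ)) = 2 := by
    rw [← Finset.sum_sub_distrib]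
    have : ∀ i : Fin N, Lconf N 1 i - (-1 : ℝ) = if i = (⟨0, hN0⟩ : Fin N) then 2 else 0 := by
      intro i
      simp only [Lconf, Fin.ext_iff]
      rcases Nat.eq_zero_or_pos (i : ℕ) with h0 | h0
      · simp [h0]; norm_num
      · rw [if_neg (by omega), if_neg (by omega)]; norm_num
    rw [Finset.sum_congr rfl (fun i _ => this i), Finset.sum_ite_eq' _ _ (fun _ => (2:ℝ))]
    simp
  have hAdiff : A1 - A2 = 2 * ∑ n ∈ Finset.Icc 1 (N - 1), J n := by
    rw [← Finset.sum_sub_distrib]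
    have step : ∀ i : Fin N, (∑ j : Fin N,
        if (i : ℕ) < (j : ℕ) then J (Nat.dist (i : ℕ) (j : ℕ)) * (-1 : ℝ) * (-1 : ℝ) else 0)
        - (∑ j : Fin N, if (i : ℕ) < (j : ℕ) then J (Nat.dist (i : ℕ) (j : ℕ)) * Lconf N 1 i * Lconf N 1 j else 0)
        = if i = (⟨0, hN0⟩ : Fin N) then ∑ j : Fin N, (if 0 < (j : ℕ) then 2 * J (j : ℕ) else 0) else 0 := by
      intro i
      rw [← Finset.sum_sub_distrib]
      by_cases hi : i = (⟨0, hN0⟩ : Fin N)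
      · rw [if_pos hi]
        refine Finset.sum_congr rfl fun j _ => ?_
        subst hi
        simp only [Lconf]
        rcases Nat.eq_zero_or_pos (j : ℕ) with hj | hj
        · simp [hj]
        · rw [if_pos (by simpa using hj), if_pos (by simpa using hj), if_pos (by norm_num),
            if_neg (by omega)]
          have : Nat.dist (0 : ℕ) (j : ℕ) = (j : ℕ) := by
            simp [Nat.dist]
          rw [this, if_pos hj]; ring
      · rw [if_neg hi]
        refine Finset.sum_eq_zero fun j _ => ?_
        have hi' : 0 < (i : ℕ) := by
          rcases Nat.eq_zero_or_pos (i : ℕ) with h0 | h0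
          · exact absurd (Fin.ext h0) hi
          · exact h0
        by_cases hij : (i : ℕ) < (j : ℕ)
        · rw [if_pos hij, if_pos hij]
          simp only [Lconf]
          rw [if_neg (by omega), if_neg (by omega)]
          ring
        · rw [if_neg hij, if_neg hij]; ring
    rw [Finset.sum_congr rfl (fun i _ => step i),
      Finset.sum_ite_eq' Finset.univ (⟨0, hN0⟩ : Fin N)]
    simp only [Finset.mem_univ, if_pos]
    rw [Fin.sum_univ_eq_sum_range (fun n => if 0 < n then 2 * J n else 0) N]
    rw [Finset.sum_ite, Finset.sum_const_zero, add_zero]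
    have hfil : (Finset.range N).filter (fun n => 0 < n) = Finset.Icc 1 (N - 1) := by
      ext n; simp [Finset.mem_filter, Finset.mem_range, Finset.mem_Icc]; omega
    rw [hfil, Finset.mul_sum]
  have hL1 : H N J h (Lconf N 1) = -A2 - h * ∑ i : Fin N, Lconf N 1 i := rfl
  have hM : H N J h (fun _ => -1 : Fin N → ℝ) = -A1 - h * ∑ i : Fin N, (-1 : ℝ) := rfl
  rw [hL1, hM]
  nlinarith [hh1, hh0, hSdiff, hAdiff]
end
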